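/- arXiv:1003.5688 — 12 statements merged into one kernel-verified Lean document; each statement's English description precedes it below -/
import Mathlib

section
/- Let m = 2n+k with n ≥ 1, k ≥ 0, and let v_0,…,v_{m-1} ∈ ℝ^{k+1} with v_j = (1, t_j, t_j^2, …, t_j^k) for real numbers t_0 < t_1 < … < t_{m-1}. Then for every stable subset S of ℤ_m of cardinality n (i.e., S contains no two cyclically consecutive elements), the alternating sum ∑_{i∈S} (-1)^i v_i is nonzero. -/
/-!
If the alternating sum vanished, then `∑_{i ∈ S} (-1)^i q(t_i) = 0` for every real
polynomial `q` of degree at most `k`. Call `d < m - 1` a gap of `S` if neither `d` nor `d + 1`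
lies in `S`. Each `d < m - 1` satisfies exactly one of `d ∈ S`, `d + 1 ∈ S`, or is a gap, so
there are at most `k` gaps (cyclic stability excludes `0, m - 1 ∈ S` simultaneously). Let `q`
have simple roots at the points `t_{d+1}`, `d` a gap. The same count, stopped at `i ∈ S`, shows
that `i` plus the number of gaps below `i` has constant parity, so `(-1)^i q(t_i)` has the same
strict sign for all `i ∈ S`, and the sum cannot vanish.
-/

open Finset Polynomial

theorem sum_mul_eval_eq_zero_of_sum_smul_moment_eq_zero {R ι : Type*} [CommRing R]
    {s : Finset ι} {w x : ι → R} {k : ℕ} {q : R[X]}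
    (h : ∑ i ∈ s, w i • (fun d : Fin (k + 1) => x i ^ (d : ℕ)) = 0)
    (hq : q.natDegree ≤ k) :
    ∑ i ∈ s, w i * q.eval (x i) = 0 := by
  have hcoord : ∀ d < k + 1, ∑ i ∈ s, w i * x i ^ d = 0 := fun d hd => by
    simpa [Finset.sum_apply] using congrFun h ⟨d, hd⟩
  calc ∑ i ∈ s, w i * q.eval (x i)
      = ∑ d ∈ range (k + 1), q.coeff d * ∑ i ∈ s, w i * x i ^ d := by
        simp_rw [eval_eq_sum_range' (Nat.lt_succ_of_le hq), mul_sum]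
        rw [sum_comm]
        exact sum_congr rfl fun i _ => sum_congr rfl fun d _ => by ring
    _ = 0 := sum_eq_zero fun d hd => by rw [hcoord d (mem_range.1 hd), mul_zero]

theorem prod_sub_eq_neg_one_pow_mul_prod_abs {R ι : Type*} [CommRing R] [LinearOrder R]
    [IsStrictOrderedRing R] (s : Finset ι) (x : R) (a : ι → R) :
    ∏ i ∈ s, (x - a i) = (-1) ^ #{i ∈ s | x < a i} * ∏ i ∈ s, |x - a i| := by
  have hfactor : ∀ i ∈ s, x - a i = (if x < a i then -1 else 1) * |x - a i| := by
    intro i _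
    split_ifs with h
    · rw [abs_of_neg (sub_neg.2 h)]; ring
    · rw [abs_of_nonneg (sub_nonneg.2 (not_lt.1 h)), one_mul]
  rw [prod_congr rfl hfactor, prod_mul_distrib, prod_ite, prod_const, prod_const, one_pow,
    mul_one]

section Gaps

def gaps (S : Finset ℕ) (N : ℕ) : Finset ℕ := {d ∈ range N | d ∉ S ∧ d + 1 ∉ S}

variable {S : Finset ℕ}

theorem card_gaps_add_card_add_card (hS : ∀ d ∈ S, d + 1 ∉ S) (N : ℕ) :
    #(gaps S N) + #{d ∈ range N | d ∈ S} + #{d ∈ range (N + 1) | d ∈ S} =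
      N + if 0 ∈ S then 1 else 0 := by
  have hclass : ∀ d, ((if d ∉ S ∧ d + 1 ∉ S then 1 else 0) + (if d ∈ S then 1 else 0) +
      if d + 1 ∈ S then 1 else 0) = 1 := by
    intro d
    have := hS d
    split_ifs <;> tauto
  rw [gaps, card_filter, card_filter, card_filter, sum_range_succ', ← add_assoc,
    ← sum_add_distrib, ← sum_add_distrib, sum_congr rfl fun d _ => hclass d]
  simp

theorem card_gaps_add_two_mul_card_le (hS : ∀ d ∈ S, d + 1 ∉ S) {N : ℕ}
    (hSN : S ⊆ range (N + 1)) (hwrap : 0 ∈ S → N ∉ S) :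
    #(gaps S N) + 2 * #S ≤ N + 1 := by
  have hcount := card_gaps_add_card_add_card hS N
  have hall : {d ∈ range (N + 1) | d ∈ S} = S := by
    rw [filter_mem_eq_inter, inter_eq_right.2 hSN]
  have hlast :
      #{d ∈ range (N + 1) | d ∈ S} = #{d ∈ range N | d ∈ S} + if N ∈ S then 1 else 0 := by
    rw [card_filter, card_filter, sum_range_succ]
  rw [hall] at hcount hlast
  split_ifs at hcount hlast with h0 hN
  · exact absurd hN (hwrap h0)
  all_goals omega

theorem card_gaps_mod_two (hS : ∀ d ∈ S, d + 1 ∉ S) {i : ℕ} (hi : i ∈ S) :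
    (i + #(gaps S i)) % 2 = (1 + if 0 ∈ S then 1 else 0) % 2 := by
  have hcount := card_gaps_add_card_add_card hS i
  have hstep : #{d ∈ range (i + 1) | d ∈ S} = #{d ∈ range i | d ∈ S} + 1 := by
    rw [card_filter, card_filter, sum_range_succ, if_pos hi]
  split_ifs at hcount ⊢ <;> omega

variable {t : ℕ → ℝ} {N : ℕ}

theorem neg_one_pow_mul_prod_sub_gaps (hS : ∀ d ∈ S, d + 1 ∉ S)
    (ht : StrictMonoOn t (Set.Iic N)) {i : ℕ} (hi : i ∈ S) (hiN : i ≤ N) :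
    (-1) ^ i * ∏ d ∈ gaps S N, (t i - t (d + 1)) =
      (-1) ^ (#(gaps S N) + 1 + if 0 ∈ S then 1 else 0) *
        ∏ d ∈ gaps S N, |t i - t (d + 1)| := by
  rw [prod_sub_eq_neg_one_pow_mul_prod_abs, ← mul_assoc, ← pow_add]
  congr 1
  have habove : {d ∈ gaps S N | t i < t (d + 1)} = {d ∈ gaps S N | ¬ d < i} := by
    refine filter_congr fun d hd => ?_
    simp only [gaps, mem_filter, mem_range] at hd
    have hne : d + 1 ≠ i := fun h => hd.2.2 (h ▸ hi)
    rw [ht.lt_iff_lt (Set.mem_Iic.2 hiN) (Set.mem_Iic.2 (by omega))]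
    omega
  have hbelow : {d ∈ gaps S N | d < i} = gaps S i := by
    ext d
    simp only [gaps, mem_filter, mem_range]
    constructor
    · rintro ⟨⟨-, hgap⟩, hdi⟩
      exact ⟨hdi, hgap⟩
    · rintro ⟨hdi, hgap⟩
      exact ⟨⟨by omega, hgap⟩, hdi⟩
  have hsplit := card_filter_add_card_filter_not (s := gaps S N) (p := (· < i))
  have hpar := card_gaps_mod_two hS hi
  rw [habove]
  rw [hbelow] at hsplit
  apply neg_one_pow_congr
  simp only [Nat.even_iff]
  split_ifs at hpar ⊢ <;> omega

theorem prod_abs_sub_gaps_pos (ht : StrictMonoOn t (Set.Iic N)) {i : ℕ} (hi : i ∈ S)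
    (hiN : i ≤ N) :
    0 < ∏ d ∈ gaps S N, |t i - t (d + 1)| := by
  refine prod_pos fun d hd => abs_pos.2 (sub_ne_zero.2 fun h => ?_)
  simp only [gaps, mem_filter, mem_range] at hd
  have := ht.injOn (Set.mem_Iic.2 hiN) (Set.mem_Iic.2 (by omega)) h
  exact hd.2.2 (this ▸ hi)

end Gaps

/-- For `m = 2n+k`, vectors `v_j = (1, t_j, …, t_j^k)` on the moment curve
with `t_0 < … < t_{m-1}`, and any stable `n`-subset `S` of `ℤ_m`,
the alternating sum `∑_{i ∈ S} (-1)^i v_i` is nonzero. -/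
theorem stmt0 (n k m : ℕ) (hn : 1 ≤ n) (hm : m = 2 * n + k)
    (t : ℕ → ℝ) (ht : ∀ i j, i < j → j < m → t i < t j)
    (S : Finset ℕ) (hSsub : S ⊆ Finset.range m) (hScard : S.card = n)
    (hstable : ∀ i ∈ S, (i + 1) % m ∉ S) :
    (∑ i ∈ S, ((-1 : ℝ) ^ i) • (fun d : Fin (k + 1) => t i ^ (d : ℕ))) ≠ 0 := by
  obtain ⟨N, rfl⟩ : ∃ N, m = N + 1 := ⟨m - 1, by omega⟩
  have hS : ∀ d ∈ S, d + 1 ∉ S := fun d hd hd1 =>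
    hstable d hd (by rwa [Nat.mod_eq_of_lt (mem_range.1 (hSsub hd1))])
  have hwrap : 0 ∈ S → N ∉ S := fun h0 hN => hstable N hN (by rwa [Nat.mod_self])
  have hle : ∀ i ∈ S, i ≤ N := fun i hi => Nat.lt_succ_iff.1 (mem_range.1 (hSsub hi))
  have htN : StrictMonoOn t (Set.Iic N) := fun i _ j hj hij =>
    ht i j hij (Nat.lt_succ_of_le (Set.mem_Iic.1 hj))
  have hdeg : (∏ d ∈ gaps S N, (X - C (t (d + 1)))).natDegree ≤ k := by
    have := card_gaps_add_two_mul_card_le hS hSsub hwrap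
    rw [natDegree_finsetProd_X_sub_C_eq_card]
    omega
  intro hzero
  have hvanish := sum_mul_eval_eq_zero_of_sum_smul_moment_eq_zero hzero hdeg
  simp only [eval_prod, eval_sub, eval_X, eval_C] at hvanish
  rw [sum_congr rfl fun i hi => neg_one_pow_mul_prod_sub_gaps hS htN hi (hle i hi),
    ← mul_sum] at hvanish
  have hpos : 0 < ∑ i ∈ S, ∏ d ∈ gaps S N, |t i - t (d + 1)| :=
    sum_pos (fun i hi => prod_abs_sub_gaps_pos htN hi (hle i hi)) (card_pos.1 (by omega))
  exact mul_ne_zero (pow_ne_zero _ (neg_ne_zero.2 one_ne_zero)) hpos.ne' hvanish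
end

section
/- Let n ≥ 1, k ≥ 0, m = 2n+k, and let s ∈ {-1,0,+1}^m be a sign vector with exactly k zeros such that s has a sign change at every zero (i.e., consecutive nonzero entries s_{i_j}, s_{i_{j+1}} at positions i_j < i_{j+1} satisfy s_{i_{j+1}} = (-1)^{i_{j+1}-i_j-1} s_{i_j}). Then the sets S_0(s) = {j : (-1)^j s_j = 1} and S_1(s) = {j : (-1)^j s_j = -1} are disjoint stable subsets of ℤ_m, each of cardinality n. -/
open Finset

/-!
Put `t j = (-1)^j s_j`. The sign-change condition says exactly that consecutive nonzero entries
of `t` have opposite signs, and `S_0`, `S_1` are the positions where `t` is `1` resp. `-1`.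
Along a run `a ≤ b` from one nonzero entry to another the alternation gives
`2 ∑_{a ≤ i ≤ b} t_i = t_a + t_b`; hence `2 ∑ t ∈ {-2, 0, 2}`, while `∑ t = #S_0 - #S_1` has the
parity of `#S_0 + #S_1 = 2n`. So `∑ t = 0` and `#S_0 = #S_1 = n`. Applied with `a = 0`,
`b = m - 1`, the same identity makes `t` alternate across the wrap-around as well, which gives
stability in `ℤ_m`.
-/

def NonzeroTermsAlternate (m : ℕ) (t : ℕ → ℤ) : Prop :=
  ∀ a b, a < b → b < m → t a ≠ 0 → t b ≠ 0 → (∀ l, a < l → l < b → t l = 0) → t b = -t a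

theorem nonzeroTermsAlternate_neg_one_pow_mul {m : ℕ} {s : ℕ → ℤ}
    (hsc : ∀ i j, i < j → j < m → s i ≠ 0 → s j ≠ 0 →
      (∀ l, i < l → l < j → s l = 0) → s j = (-1) ^ (j - i - 1) * s i) :
    NonzeroTermsAlternate m fun j => (-1) ^ j * s j := by
  intro a b hab hb ha hb0 hgap
  beta_reduce
  simp only [ne_eq, mul_eq_zero, pow_eq_zero_iff', neg_eq_zero, one_ne_zero, false_and,
    false_or] at ha hb0 hgap
  obtain ⟨d, rfl⟩ := Nat.exists_eq_add_of_lt hab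
  rw [hsc a _ hab hb ha hb0 hgap, show a + d + 1 - a - 1 = d by omega]
  have hsq : ((-1 : ℤ) ^ d) ^ 2 = 1 := by rw [← pow_mul, pow_mul', neg_one_sq, one_pow]
  linear_combination (-(-1 : ℤ) ^ a * s a) * hsq

section

variable {m : ℕ} {t : ℕ → ℤ}

theorem sum_range_eq_card_sub_card (hval : ∀ j < m, t j = -1 ∨ t j = 0 ∨ t j = 1) :
    ∑ i ∈ range m, t i = #((range m).filter (t · = 1)) - #((range m).filter (t · = -1)) := by
  rw [natCast_card_filter, natCast_card_filter, ← sum_sub_distrib]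
  refine sum_congr rfl fun j hj => ?_
  rcases hval j (mem_range.1 hj) with h | h | h <;> simp [h]

theorem card_filter_ne_zero_eq_card_add_card (hval : ∀ j < m, t j = -1 ∨ t j = 0 ∨ t j = 1) :
    #((range m).filter (t · ≠ 0)) =
      #((range m).filter (t · = 1)) + #((range m).filter (t · = -1)) := by
  rw [← card_union_of_disjoint (disjoint_filter.2 fun _ _ h1 h2 => by omega), ← filter_or]
  congr 1
  refine filter_congr fun j hj => ?_
  have := hval j (mem_range.1 hj)
  omega

namespace NonzeroTermsAlternate

theorem two_mul_sum_Ico (h : NonzeroTermsAlternate m t) {a b : ℕ} (hab : a ≤ b) (hb : b < m)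
    (ha : t a ≠ 0) (hb0 : t b ≠ 0) : 2 * ∑ i ∈ Ico a (b + 1), t i = t a + t b := by
  induction b using Nat.strong_induction_on with
  | _ b ih =>
  rcases hab.eq_or_lt with rfl | hab
  · simp only [Nat.Ico_succ_singleton, sum_singleton]; ring
  set P := (Ico a b).filter (t · ≠ 0)
  have hP : P.Nonempty := ⟨a, by simp [P, hab, ha]⟩
  obtain ⟨hp, hp0⟩ := mem_filter.1 (P.max'_mem hP)
  set p := P.max' hP
  rw [mem_Ico] at hp
  have hgap : ∀ l, p < l → l < b → t l = 0 := by
    intro l hpl hlb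
    by_contra hl
    have hlP : l ∈ P := by simp only [P, mem_filter, mem_Ico]; exact ⟨⟨by omega, hlb⟩, hl⟩
    exact (P.le_max' l hlP).not_gt hpl
  have hsplit : ∑ i ∈ Ico a (b + 1), t i = ∑ i ∈ Ico a (p + 1), t i + t b := by
    rw [← sum_Ico_consecutive _ (by omega : a ≤ p + 1) (by omega : p + 1 ≤ b + 1),
      sum_Ico_succ_top (show p + 1 ≤ b by omega), sum_eq_zero (s := Ico (p + 1) b) fun l hl => by
        rw [mem_Ico] at hl; exact hgap l (by omega) hl.2]
    ring
  rw [hsplit, mul_add, ih p hp.2 hp.1 (by omega) hp0, h p b hp.2 hb hp0 hb0 hgap]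
  ring

theorem two_mul_sum_range (h : NonzeroTermsAlternate m t) {a b : ℕ} (hab : a ≤ b) (hb : b < m)
    (ha : t a ≠ 0) (hb0 : t b ≠ 0) (hsupp : ∀ j < m, t j ≠ 0 → a ≤ j ∧ j ≤ b) :
    2 * ∑ i ∈ range m, t i = t a + t b := by
  rw [← h.two_mul_sum_Ico hab hb ha hb0]
  congr 1
  refine (sum_subset (fun j hj => ?_) fun j hj hj' => ?_).symm
  · rw [mem_Ico] at hj; rw [mem_range]; omega
  · by_contra hj0
    have := hsupp j (mem_range.1 hj) hj0
    rw [mem_Ico] at hj'; omega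

theorem sum_range_eq_zero (h : NonzeroTermsAlternate m t)
    (hval : ∀ j < m, t j = -1 ∨ t j = 0 ∨ t j = 1)
    (heven : Even #((range m).filter (t · ≠ 0))) : ∑ i ∈ range m, t i = 0 := by
  obtain ⟨r, hr⟩ := heven
  have hdiff := sum_range_eq_card_sub_card hval
  have hcard := card_filter_ne_zero_eq_card_add_card hval
  set N := (range m).filter (t · ≠ 0)
  rcases N.eq_empty_or_nonempty with hN | hN
  · rw [hN, card_empty] at hcard; omega
  obtain ⟨ha, ha0⟩ := mem_filter.1 (N.min'_mem hN)
  obtain ⟨hb, hb0⟩ := mem_filter.1 (N.max'_mem hN)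
  have h2 := h.two_mul_sum_range (N.min'_le_max' hN) (mem_range.1 hb) ha0 hb0 fun j hj hj0 =>
    ⟨N.min'_le j (by simp [N, hj, hj0]), N.le_max' j (by simp [N, hj, hj0])⟩
  have := hval _ (mem_range.1 ha)
  have := hval _ (mem_range.1 hb)
  omega

theorem apply_succ_mod_eq_neg (h : NonzeroTermsAlternate m t) (hsum : ∑ i ∈ range m, t i = 0)
    {i : ℕ} (hi : i < m) (hi0 : t i ≠ 0) (hj0 : t ((i + 1) % m) ≠ 0) : t ((i + 1) % m) = -t i := by
  obtain hlt | heq : i + 1 < m ∨ i + 1 = m := by omega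
  · rw [Nat.mod_eq_of_lt hlt] at hj0 ⊢
    exact h i (i + 1) (lt_add_one i) hlt hi0 hj0 fun l _ _ => by omega
  · rw [heq, Nat.mod_self] at hj0 ⊢
    have := h.two_mul_sum_range (Nat.zero_le i) hi hj0 hi0 fun j hj _ =>
      ⟨Nat.zero_le j, by omega⟩
    omega

end NonzeroTermsAlternate

end

theorem stmt2_general (n k m : ℕ) (hm : m = 2 * n + k)
    (s : ℕ → ℤ)
    (hvals : ∀ j < m, s j = -1 ∨ s j = 0 ∨ s j = 1)
    (hzeros : ((Finset.range m).filter fun j => s j = 0).card = k)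
    (hsc : ∀ i j, i < j → j < m → s i ≠ 0 → s j ≠ 0 →
      (∀ l, i < l → l < j → s l = 0) → s j = (-1) ^ (j - i - 1) * s i) :
    let S0 : Finset ℕ := (Finset.range m).filter fun j => (-1 : ℤ) ^ j * s j = 1
    let S1 : Finset ℕ := (Finset.range m).filter fun j => (-1 : ℤ) ^ j * s j = -1
    Disjoint S0 S1 ∧ S0.card = n ∧ S1.card = n ∧
      (∀ i ∈ S0, (i + 1) % m ∉ S0) ∧ (∀ i ∈ S1, (i + 1) % m ∉ S1) := by
  intro S0 S1
  set t : ℕ → ℤ := fun j => (-1) ^ j * s j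
  have ht0 : ∀ j, t j ≠ 0 ↔ s j ≠ 0 := fun j => by simp [t]
  have halt : NonzeroTermsAlternate m t := nonzeroTermsAlternate_neg_one_pow_mul hsc
  have hval : ∀ j < m, t j = -1 ∨ t j = 0 ∨ t j = 1 := fun j hj => by
    rcases neg_one_pow_eq_or ℤ j with h | h <;> rcases hvals j hj with h' | h' | h' <;>
      simp [t, h, h']
  have hnonzero : #((range m).filter (t · ≠ 0)) = 2 * n := by
    have hsplit := card_filter_add_card_filter_not (s := range m) (fun j => s j = 0)
    rw [card_range] at hsplit
    rw [filter_congr fun j _ => ht0 j]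
    simp only [ne_eq]
    omega
  have hsum := halt.sum_range_eq_zero hval ⟨n, by omega⟩
  have hcard : #((range m).filter (t · ≠ 0)) = #S0 + #S1 :=
    card_filter_ne_zero_eq_card_add_card hval
  have hdiff : ∑ i ∈ range m, t i = #S0 - #S1 := sum_range_eq_card_sub_card hval
  have hstable : ∀ v ≠ (0 : ℤ), ∀ i ∈ (range m).filter (t · = v),
      (i + 1) % m ∉ (range m).filter (t · = v) := by
    intro v hv i hi hj
    rw [mem_filter, mem_range] at hi hj
    have := halt.apply_succ_mod_eq_neg hsum hi.1 (hi.2 ▸ hv) (hj.2 ▸ hv)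
    omega
  exact ⟨disjoint_filter.2 fun j _ h1 h2 => by omega, by omega, by omega,
    hstable 1 one_ne_zero, hstable (-1) (by norm_num)⟩

/-- If `s ∈ {-1,0,1}^m` (`m = 2n+k`) has exactly `k` zeros and a sign
change at every zero (consecutive nonzero entries at positions `i < j` satisfy
`s_j = (-1)^(j-i-1) s_i`), then `S_0(s) = {j : (-1)^j s_j = 1}` and
`S_1(s) = {j : (-1)^j s_j = -1}` are disjoint stable subsets of `ℤ_m` of cardinality `n`. -/
theorem stmt2 (n k m : ℕ) (hn : 1 ≤ n) (hm : m = 2 * n + k)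
    (s : ℕ → ℤ)
    (hvals : ∀ j < m, s j = -1 ∨ s j = 0 ∨ s j = 1)
    (hzeros : ((Finset.range m).filter fun j => s j = 0).card = k)
    (hsc : ∀ i j, i < j → j < m → s i ≠ 0 → s j ≠ 0 →
      (∀ l, i < l → l < j → s l = 0) → s j = (-1) ^ (j - i - 1) * s i) :
    let S0 : Finset ℕ := (Finset.range m).filter fun j => (-1 : ℤ) ^ j * s j = 1
    let S1 : Finset ℕ := (Finset.range m).filter fun j => (-1 : ℤ) ^ j * s j = -1
    Disjoint S0 S1 ∧ S0.card = n ∧ S1.card = n ∧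
      (∀ i ∈ S0, (i + 1) % m ∉ S0) ∧ (∀ i ∈ S1, (i + 1) % m ∉ S1) :=
  stmt2_general n k m hm s hvals hzeros hsc
end

section
/- Let m = 2n+k, k ≥ 0, and suppose S ⊆ {0,…,m-1} is a stable subset (no two cyclically consecutive elements) such that there exist indices j_0 < j_1 < … < j_{k+1} in S with (-1)^{j_{s+1}} = -(-1)^{j_s} for all 0 ≤ s ≤ k. Then |S| < n. -/
/-- Helper: if `P` and its shift by `x ↦ (x+1) % m` are disjoint and both lie in `R`,
then `2 * |P| ≤ |R|`. -/
lemma stmt3_two_card_le (m : ℕ) (P R : Finset ℕ) (hPR : P ⊆ R)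
    (hPm : ∀ x ∈ P, x < m)
    (hsR : ∀ x ∈ P, (x + 1) % m ∈ R)
    (hsP : ∀ x ∈ P, (x + 1) % m ∉ P) :
    2 * P.card ≤ R.card := by
  classical
  set Q := P.image (fun x => (x + 1) % m) with hQ
  have hinj : Set.InjOn (fun x => (x + 1) % m) P := by
    intro x hx y hy hxy
    have hxm := hPm x hx
    have hym := hPm y hy
    simp only at hxy
    have hx1 : (x + 1) % m = if x + 1 = m then 0 else x + 1 := by
      rcases eq_or_lt_of_le (Nat.succ_le_of_lt hxm) with h | h
      · rw [if_pos h, show x + 1 = m from h, Nat.mod_self]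
      · rw [if_neg (by omega), Nat.mod_eq_of_lt h]
    have hy1 : (y + 1) % m = if y + 1 = m then 0 else y + 1 := by
      rcases eq_or_lt_of_le (Nat.succ_le_of_lt hym) with h | h
      · rw [if_pos h, show y + 1 = m from h, Nat.mod_self]
      · rw [if_neg (by omega), Nat.mod_eq_of_lt h]
    rw [hx1, hy1] at hxy
    split_ifs at hxy <;> omega
  have hcardQ : Q.card = P.card := Finset.card_image_of_injOn hinj
  have hdisj : Disjoint P Q := by
    rw [Finset.disjoint_right]
    intro a haQ haP
    rcases Finset.mem_image.1 haQ with ⟨x, hx, rfl⟩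
    exact hsP x hx haP
  have hsub : P ∪ Q ⊆ R := by
    apply Finset.union_subset hPR
    intro a ha
    rcases Finset.mem_image.1 ha with ⟨x, hx, rfl⟩
    exact hsR x hx
  calc 2 * P.card = P.card + Q.card := by omega
    _ = (P ∪ Q).card := (Finset.card_union_of_disjoint hdisj).symm
    _ ≤ R.card := Finset.card_le_card hsub

/-- If `S ⊆ {0,…,m-1}` (`m = 2n+k`) is stable (no two cyclically
consecutive elements) and contains `k+2` indices `j_0 < … < j_{k+1}` of alternating
parity, then `|S| < n`. -/
theorem stmt3 (n k m : ℕ) (hm : m = 2 * n + k)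
    (S : Finset ℕ) (hSsub : S ⊆ Finset.range m)
    (hstable : ∀ i ∈ S, (i + 1) % m ∉ S)
    (j : ℕ → ℕ)
    (hmono : ∀ a b, a < b → b ≤ k + 1 → j a < j b)
    (hmem : ∀ a ≤ k + 1, j a ∈ S)
    (halt : ∀ a ≤ k, ((-1 : ℤ)) ^ j (a + 1) = -((-1 : ℤ) ^ j a)) :
    S.card < n := by
  classical
  have hjS : ∀ x ∈ S, x < m := by
    intro x hx
    simpa [Finset.mem_range] using hSsub hx
  have hjmono : ∀ a b, a ≤ b → b ≤ k + 1 → j a ≤ j b := by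
    intro a b hab hb
    rcases eq_or_lt_of_le hab with rfl | h
    · exact le_rfl
    · exact (hmono a b h hb).le
  have hjk1m : j (k + 1) < m := hjS _ (hmem (k + 1) le_rfl)
  -- parity flips at each step
  have hpar : ∀ a, a ≤ k → j (a + 1) % 2 ≠ j a % 2 := by
    intro a ha
    have h := halt a ha
    rcases Nat.even_or_odd (j a) with h1 | h1 <;>
      rcases Nat.even_or_odd (j (a + 1)) with h2 | h2
    · rw [h1.neg_one_pow, h2.neg_one_pow] at h; norm_num at h
    · rw [Nat.even_iff] at h1; rw [Nat.odd_iff] at h2; omega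
    · rw [Nat.odd_iff] at h1; rw [Nat.even_iff] at h2; omega
    · rw [h1.neg_one_pow, h2.neg_one_pow] at h; norm_num at h
  have hpar0 : ∀ s, s ≤ k + 1 → j s % 2 = (j 0 + s) % 2 := by
    intro s
    induction s with
    | zero => intro _; simp
    | succ t ih =>
      intro hs
      have h1 := ih (by omega)
      have h2 := hpar t (by omega)
      omega
  -- the pieces
  set B : ℕ → Finset ℕ := fun s =>
    if s = k + 1 then S.filter (fun x => x < j 0 ∨ j (k + 1) ≤ x)
    else S.filter (fun x => j s ≤ x ∧ x < j (s + 1)) with hB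
  -- coverage
  have hfind : ∀ t x, j 0 ≤ x → x < j t → ∃ s, s + 1 ≤ t ∧ j s ≤ x ∧ x < j (s + 1) := by
    intro t
    induction t with
    | zero => intro x h1 h2; omega
    | succ t ih =>
      intro x h1 h2
      by_cases h : j t ≤ x
      · exact ⟨t, le_rfl, h, h2⟩
      · obtain ⟨s, hs1, hs2, hs3⟩ := ih x h1 (by omega)
        exact ⟨s, by omega, hs2, hs3⟩
  have hunion : (Finset.range (k + 2)).biUnion B = S := by
    apply Finset.Subset.antisymm
    · intro x hx
      rcases Finset.mem_biUnion.1 hx with ⟨s, _, hxs⟩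
      simp only [hB] at hxs
      split_ifs at hxs <;> exact Finset.mem_filter.1 hxs |>.1
    · intro x hx
      by_cases hx0 : x < j 0 ∨ j (k + 1) ≤ x
      · refine Finset.mem_biUnion.2 ⟨k + 1, by simp, ?_⟩
        simp only [hB, if_pos rfl, Finset.mem_filter]
        exact ⟨hx, hx0⟩
      · push_neg at hx0
        obtain ⟨s, hs1, hs2, hs3⟩ := hfind (k + 1) x hx0.1 (by omega)
        refine Finset.mem_biUnion.2 ⟨s, Finset.mem_range.2 (by omega), ?_⟩
        simp only [hB, if_neg (by omega : ¬ s = k + 1), Finset.mem_filter]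
        exact ⟨hx, hs2, hs3⟩
  -- pairwise disjointness
  have hmemB : ∀ s, s ≤ k → ∀ x ∈ B s, j s ≤ x ∧ x < j (s + 1) := by
    intro s hs x hx
    simp only [hB, if_neg (by omega : ¬ s = k + 1), Finset.mem_filter] at hx
    exact hx.2
  have hdisjB : ∀ s ∈ Finset.range (k + 2), ∀ t ∈ Finset.range (k + 2), s ≠ t →
      Disjoint (B s) (B t) := by
    have key : ∀ s t, s < t → t < k + 2 → Disjoint (B s) (B t) := by
      intro s t hst ht
      rw [Finset.disjoint_left]
      intro x hxs hxt
      have hs : s ≤ k := by omega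
      obtain ⟨h1, h2⟩ := hmemB s hs x hxs
      by_cases htk : t = k + 1
      · subst htk
        simp only [hB, if_pos rfl, Finset.mem_filter] at hxt
        have hj0s : j 0 ≤ j s := hjmono 0 s (by omega) (by omega)
        have hjs1 : j (s + 1) ≤ j (k + 1) := hjmono (s + 1) (k + 1) (by omega) le_rfl
        omega
      · obtain ⟨h3, h4⟩ := hmemB t (by omega) x hxt
        have : j (s + 1) ≤ j t := hjmono (s + 1) t (by omega) (by omega)
        omega
    intro s hs t ht hst
    rcases Nat.lt_or_ge s t with h | h
    · exact key s t h (Finset.mem_range.1 ht)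
    · exact (key t s (by omega) (Finset.mem_range.1 hs)).symm
  have hcard : S.card = ∑ s ∈ Finset.range (k + 2), (B s).card := by
    rw [← hunion]
    exact Finset.card_biUnion hdisjB
  -- bound for each piece
  set g : ℕ → ℕ := fun s =>
    if s = k + 1 then j 0 + (m - j (k + 1)) else j (s + 1) - j s with hg
  have hbound : ∀ s ∈ Finset.range (k + 2), 2 * (B s).card + 1 ≤ g s := by
    intro s hs
    rw [Finset.mem_range] at hs
    by_cases hsk : s = k + 1
    · subst hsk
      have h2c : 2 * (B (k + 1)).card ≤ j 0 + (m - j (k + 1)) := by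
        have := stmt3_two_card_le m (B (k + 1))
          (Finset.range (j 0) ∪ Finset.Ico (j (k + 1)) m) ?_ ?_ ?_ ?_
        · have hcardR : (Finset.range (j 0) ∪ Finset.Ico (j (k + 1)) m).card
              = j 0 + (m - j (k + 1)) := by
            rw [Finset.card_union_of_disjoint, Finset.card_range, Nat.card_Ico]
            rw [Finset.disjoint_left]
            intro a ha hb
            rw [Finset.mem_range] at ha
            rw [Finset.mem_Ico] at hb
            have : j 0 ≤ j (k + 1) := hjmono 0 (k + 1) (by omega) le_rfl
            omega
          omega
        · intro x hx
          simp only [hB, if_pos rfl, Finset.mem_filter] at hx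
          have hxm := hjS x hx.1
          rcases hx.2 with h | h
          · exact Finset.mem_union_left _ (Finset.mem_range.2 h)
          · exact Finset.mem_union_right _ (Finset.mem_Ico.2 ⟨h, hxm⟩)
        · intro x hx
          simp only [hB, if_pos rfl, Finset.mem_filter] at hx
          exact hjS x hx.1
        · intro x hx
          simp only [hB, if_pos rfl, Finset.mem_filter] at hx
          obtain ⟨hxS, hxd⟩ := hx
          have hxm := hjS x hxS
          have hns := hstable x hxS
          rcases hxd with h | h
          · -- x < j 0, so x + 1 < m and x + 1 < j 0
            have hxm' : x + 1 < m := by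
              have : j 0 ≤ j (k + 1) := hjmono 0 (k + 1) (by omega) le_rfl
              omega
            rw [Nat.mod_eq_of_lt hxm'] at hns ⊢
            have : x + 1 ≠ j 0 := by
              intro heq
              exact hns (heq ▸ hmem 0 (by omega))
            exact Finset.mem_union_left _ (Finset.mem_range.2 (by omega))
          · -- j (k+1) ≤ x < m
            rcases eq_or_lt_of_le (Nat.succ_le_of_lt hxm) with heq | hlt
            · -- x + 1 = m, shift is 0; then j 0 > 0
              rw [← heq, Nat.mod_self] at hns ⊢
              have hj0 : 0 < j 0 := by
                rcases Nat.eq_zero_or_pos (j 0) with h0 | h0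
                · exact absurd (h0 ▸ hmem 0 (by omega)) hns
                · exact h0
              exact Finset.mem_union_left _ (Finset.mem_range.2 hj0)
            · rw [Nat.mod_eq_of_lt hlt]
              exact Finset.mem_union_right _ (Finset.mem_Ico.2 ⟨by omega, hlt⟩)
        · intro x hx
          simp only [hB, if_pos rfl, Finset.mem_filter] at hx ⊢
          intro hc
          exact hstable x hx.1 hc.1
      -- parity of the wrap gap
      have hp := hpar0 (k + 1) le_rfl
      have hj0k : j 0 ≤ j (k + 1) := hjmono 0 (k + 1) (by omega) le_rfl
      simp only [hg, if_pos rfl]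
      omega
    · have hsk' : s ≤ k := by omega
      have hjss : j s < j (s + 1) := hmono s (s + 1) (by omega) (by omega)
      have hjs1 : j (s + 1) ≤ j (k + 1) := hjmono (s + 1) (k + 1) (by omega) le_rfl
      have h2c : 2 * (B s).card ≤ j (s + 1) - j s := by
        have := stmt3_two_card_le m (B s) (Finset.Ico (j s) (j (s + 1))) ?_ ?_ ?_ ?_
        · rwa [Nat.card_Ico] at this
        · intro x hx
          obtain ⟨h1, h2⟩ := hmemB s hsk' x hx
          exact Finset.mem_Ico.2 ⟨h1, h2⟩
        · intro x hx
          have hxS : x ∈ S := by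
            simp only [hB, if_neg (by omega : ¬ s = k + 1), Finset.mem_filter] at hx
            exact hx.1
          exact hjS x hxS
        · intro x hx
          have hxS : x ∈ S := by
            simp only [hB, if_neg (by omega : ¬ s = k + 1), Finset.mem_filter] at hx
            exact hx.1
          obtain ⟨h1, h2⟩ := hmemB s hsk' x hx
          have hxm' : x + 1 < m := by omega
          rw [Nat.mod_eq_of_lt hxm']
          have hns := hstable x hxS
          rw [Nat.mod_eq_of_lt hxm'] at hns
          have : x + 1 ≠ j (s + 1) := by
            intro heq
            exact hns (heq ▸ hmem (s + 1) (by omega))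
          exact Finset.mem_Ico.2 ⟨by omega, by omega⟩
        · intro x hx
          have hxS : x ∈ S := by
            simp only [hB, if_neg (by omega : ¬ s = k + 1), Finset.mem_filter] at hx
            exact hx.1
          intro hc
          have : (x + 1) % m ∈ S := by
            simp only [hB, if_neg (by omega : ¬ s = k + 1), Finset.mem_filter] at hc
            exact hc.1
          exact hstable x hxS this
      have hp1 := hpar s hsk'
      simp only [hg, if_neg hsk]
      omega
  -- telescoping + total
  have htel : ∀ t, t ≤ k + 1 → ∑ s ∈ Finset.range t, (j (s + 1) - j s) = j t - j 0 := by
    intro t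
    induction t with
    | zero => intro _; simp
    | succ t ih =>
      intro ht
      rw [Finset.sum_range_succ, ih (by omega)]
      have h1 : j 0 ≤ j t := hjmono 0 t (by omega) (by omega)
      have h2 : j t ≤ j (t + 1) := hjmono t (t + 1) (by omega) (by omega)
      omega
  have hsumg : ∑ s ∈ Finset.range (k + 2), g s = m := by
    rw [Finset.sum_range_succ]
    have h1 : ∑ s ∈ Finset.range (k + 1), g s
        = ∑ s ∈ Finset.range (k + 1), (j (s + 1) - j s) := by
      apply Finset.sum_congr rfl
      intro s hs
      rw [Finset.mem_range] at hs
      simp only [hg, if_neg (by omega : ¬ s = k + 1)]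
    rw [h1, htel (k + 1) le_rfl]
    simp only [hg, if_pos rfl]
    have hj0k : j 0 ≤ j (k + 1) := hjmono 0 (k + 1) (by omega) le_rfl
    omega
  have hmain : 2 * S.card + (k + 2) ≤ m := by
    calc 2 * S.card + (k + 2)
        = ∑ s ∈ Finset.range (k + 2), (2 * (B s).card + 1) := by
          rw [Finset.sum_add_distrib, ← Finset.mul_sum, ← hcard, Finset.sum_const,
            Finset.card_range, smul_eq_mul, mul_one]
      _ ≤ ∑ s ∈ Finset.range (k + 2), g s := Finset.sum_le_sum hbound
      _ = m := hsumg
  omega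
end

section
/- Let k = 2r with r ≥ 0 and let w(t) = (1, cos t, sin t, cos 2t, sin 2t, …, cos rt, sin rt) ∈ ℝ^{k+1}. Then for all real numbers a_1 ≤ a_2 ≤ … ≤ a_k with a_k ≤ a_1 + 2π, setting a_0 = a_k − 2π, the alternating sum of integrals ∑_{s=0}^{k-1} (-1)^s ∫_{a_s}^{a_{s+1}} w(t) dt is nonzero. -/
/-- The trigonometric moment curve `w(t) = (1, cos t, sin t, …, cos rt, sin rt)` in
`ℝ^{2r+1}`, written with coordinates indexed by `Fin (k+1)`, `k = 2r`. -/
noncomputable def trigMomentCurve (k : ℕ) : ℝ → (Fin (k + 1) → ℝ) := fun t i =>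
  if (i : ℕ) = 0 then 1
  else if (i : ℕ) % 2 = 1 then Real.cos (((((i : ℕ) + 1) / 2 : ℕ) : ℝ) * t)
  else Real.sin ((((i : ℕ) / 2 : ℕ) : ℝ) * t)

/-!
If the alternating sum vanished, the functional `f ↦ ∑ₛ (-1)ˢ ∫_{aₛ}^{aₛ₊₁} f` would
annihilate every coordinate of `w`, hence every real trigonometric polynomial of degree at
most `r`. But `P(t) = ∏_{j=1}^{k} sin ((t - aⱼ) / 2)` is one, since the product of two such
factors has degree one. As all the `aⱼ` lie in a window of length `2π`, `(-1)ˢ P` is positive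
inside `(aₛ, aₛ₊₁)`; as the `aₛ` sweep a full period, one of these intervals is nondegenerate,
so the functional is positive at `P`.
-/

open Real Finset

noncomputable section

def cosWave (m : ℤ) (φ : ℝ) : ℝ → ℝ := fun t => cos (m * t + φ)

/-- Phase-shifted cosines span the same space as `cos (m t)`, `sin (m t)`, but are closed under a
single product-to-sum formula. -/
def trigPoly (n : ℕ) : Submodule ℝ (ℝ → ℝ) :=
  Submodule.span ℝ {f | ∃ (m : ℤ) (φ : ℝ), |m| ≤ n ∧ cosWave m φ = f}

lemma cosWave_mem_trigPoly {n : ℕ} {m : ℤ} (hm : |m| ≤ n) (φ : ℝ) : cosWave m φ ∈ trigPoly n :=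
  Submodule.subset_span ⟨m, φ, hm, rfl⟩

lemma cosWave_neg (m : ℤ) (φ : ℝ) : cosWave (-m) φ = cosWave m (-φ) := by
  funext t
  rw [cosWave, cosWave, ← cos_neg]
  push_cast
  ring_nf

lemma cos_mul_cos_eq (x y : ℝ) : cos x * cos y = (cos (x + y) + cos (x - y)) / 2 := by
  rw [cos_add, cos_sub]
  ring

lemma cosWave_mul_cosWave (m m' : ℤ) (φ ψ : ℝ) :
    cosWave m φ * cosWave m' ψ =
      (1 / 2 : ℝ) • cosWave (m + m') (φ + ψ) + (1 / 2 : ℝ) • cosWave (m - m') (φ - ψ) := by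
  funext t
  simp only [cosWave, Pi.mul_apply, Pi.add_apply, Pi.smul_apply, smul_eq_mul, cos_mul_cos_eq]
  push_cast
  ring_nf

lemma trigPoly_mul_le (n n' : ℕ) : trigPoly n * trigPoly n' ≤ trigPoly (n + n') := by
  rw [trigPoly, trigPoly, Submodule.span_mul_span, Submodule.span_le]
  rintro _ ⟨_, ⟨m, φ, hm, rfl⟩, _, ⟨m', ψ, hm', rfl⟩, rfl⟩
  have hadd : |m + m'| ≤ (n + n' : ℕ) := by
    push_cast; exact (abs_add_le _ _).trans (add_le_add hm hm')
  have hsub : |m - m'| ≤ (n + n' : ℕ) := by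
    push_cast; exact (abs_sub _ _).trans (add_le_add hm hm')
  show cosWave m φ * cosWave m' ψ ∈ _
  rw [cosWave_mul_cosWave]
  exact add_mem (Submodule.smul_mem _ _ (cosWave_mem_trigPoly hadd _))
    (Submodule.smul_mem _ _ (cosWave_mem_trigPoly hsub _))

lemma sin_half_mul_sin_half_mem_trigPoly_one (u v : ℝ) :
    (fun t => sin ((t - u) / 2)) * (fun t => sin ((t - v) / 2)) ∈ trigPoly 1 := by
  have h : (fun t => sin ((t - u) / 2)) * (fun t => sin ((t - v) / 2)) =
      (1 / 2 : ℝ) • cosWave 0 ((v - u) / 2) - (1 / 2 : ℝ) • cosWave 1 (-((u + v) / 2)) := by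
    funext t
    simp only [cosWave, Pi.mul_apply, Pi.sub_apply, Pi.smul_apply, smul_eq_mul, Int.cast_zero,
      Int.cast_one, zero_mul, one_mul, zero_add]
    rw [show (v - u) / 2 = (t - u) / 2 - (t - v) / 2 by ring,
      show t + -((u + v) / 2) = (t - u) / 2 + (t - v) / 2 by ring, cos_sub, cos_add]
    ring
  rw [h]
  exact sub_mem (Submodule.smul_mem _ _ (cosWave_mem_trigPoly (by simp) _))
    (Submodule.smul_mem _ _ (cosWave_mem_trigPoly (by simp) _))

lemma prod_sin_half_mem_trigPoly (b : ℕ → ℝ) (r : ℕ) :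
    (fun t => ∏ j ∈ range (2 * r), sin ((t - b j) / 2)) ∈ trigPoly r := by
  rw [← Finset.prod_fn]
  induction r with
  | zero =>
    have h : (1 : ℝ → ℝ) = cosWave 0 0 := by funext t; simp [cosWave]
    simpa [h] using cosWave_mem_trigPoly (n := 0) (m := 0) le_rfl 0
  | succ r ih =>
    rw [Nat.mul_succ, prod_range_succ, prod_range_succ, mul_assoc]
    exact trigPoly_mul_le r 1
      (Submodule.mul_mem_mul ih (sin_half_mul_sin_half_mem_trigPoly_one _ _))

def alternatingIntegral (a : ℕ → ℝ) (k : ℕ) (f : ℝ → ℝ) : ℝ :=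
  ∑ s ∈ range k, (-1) ^ s * ∫ t in a s..a (s + 1), f t

lemma alternatingIntegral_add (a : ℕ → ℝ) (k : ℕ) {f g : ℝ → ℝ} (hf : Continuous f)
    (hg : Continuous g) :
    alternatingIntegral a k (f + g) = alternatingIntegral a k f + alternatingIntegral a k g := by
  simp only [alternatingIntegral, ← sum_add_distrib, ← mul_add, Pi.add_apply]
  refine sum_congr rfl fun s _ => ?_
  rw [intervalIntegral.integral_add (hf.intervalIntegrable _ _) (hg.intervalIntegrable _ _)]

lemma alternatingIntegral_smul (a : ℕ → ℝ) (k : ℕ) (c : ℝ) (f : ℝ → ℝ) :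
    alternatingIntegral a k (c • f) = c * alternatingIntegral a k f := by
  simp only [alternatingIntegral, mul_sum, Pi.smul_apply, smul_eq_mul,
    intervalIntegral.integral_const_mul, mul_left_comm]

lemma alternatingIntegral_apply {ι : Type*} [Fintype ι] {F : ℝ → ι → ℝ} (hF : Continuous F)
    (a : ℕ → ℝ) (k : ℕ) (i : ι) :
    alternatingIntegral a k (fun t => F t i) =
      (∑ s ∈ range k, (-1 : ℝ) ^ s • ∫ t in a s..a (s + 1), F t) i := by
  simp only [alternatingIntegral, Finset.sum_apply, Pi.smul_apply, smul_eq_mul]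
  refine sum_congr rfl fun s _ => congrArg _ ?_
  exact (ContinuousLinearMap.proj (R := ℝ) (φ := fun _ : ι => ℝ) i).intervalIntegral_comp_comm
    (hF.intervalIntegrable _ _)

/-- Continuity is part of the carrier: the interval integral is additive only on integrable
functions. -/
def alternatingIntegralKer (a : ℕ → ℝ) (k : ℕ) : Submodule ℝ (ℝ → ℝ) where
  carrier := {f | Continuous f ∧ alternatingIntegral a k f = 0}
  add_mem' := fun ⟨hf, hf0⟩ ⟨hg, hg0⟩ =>
    ⟨hf.add hg, by rw [alternatingIntegral_add a k hf hg, hf0, hg0, add_zero]⟩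
  zero_mem' := ⟨continuous_const, by simp [alternatingIntegral]⟩
  smul_mem' := fun c _ ⟨hf, hf0⟩ =>
    ⟨hf.const_smul c, by rw [alternatingIntegral_smul, hf0, mul_zero]⟩

lemma continuous_trigMomentCurve (k : ℕ) : Continuous (trigMomentCurve k) := by
  refine continuous_pi fun i => ?_
  unfold trigMomentCurve
  split_ifs <;> fun_prop

/-- For `n = 0` the index `2 * n - 1` truncates to `0`, the constant coordinate. -/
lemma cos_nat_mul_eq_trigMomentCurve {n k : ℕ} (h : 2 * n ≤ k) :
    (fun t => cos (n * t)) = fun t => trigMomentCurve k t ⟨2 * n - 1, by omega⟩ := by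
  funext t
  rcases Nat.eq_zero_or_pos n with rfl | hn
  · simp [trigMomentCurve]
  · simp only [trigMomentCurve]
    rw [if_neg (by omega), if_pos (by omega), show (2 * n - 1 + 1) / 2 = n by omega]

lemma sin_nat_mul_eq_trigMomentCurve {n k : ℕ} (hn : 0 < n) (h : 2 * n ≤ k) :
    (fun t => sin (n * t)) = fun t => trigMomentCurve k t ⟨2 * n, by omega⟩ := by
  funext t
  simp only [trigMomentCurve]
  rw [if_neg (by omega), if_neg (by omega), show 2 * n / 2 = n by omega]

lemma trigPoly_le_alternatingIntegralKer {r : ℕ} {a : ℕ → ℝ}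
    (hS : ∑ s ∈ range (2 * r), (-1 : ℝ) ^ s • ∫ t in a s..a (s + 1), trigMomentCurve (2 * r) t =
      0) :
    trigPoly r ≤ alternatingIntegralKer a (2 * r) := by
  have hw := continuous_trigMomentCurve (2 * r)
  have hcomp (i : Fin (2 * r + 1)) :
      (fun t => trigMomentCurve (2 * r) t i) ∈ alternatingIntegralKer a (2 * r) :=
    ⟨(continuous_apply i).comp hw, by rw [alternatingIntegral_apply hw, hS, Pi.zero_apply]⟩
  have hwave (n : ℕ) (hn : n ≤ r) (φ : ℝ) : cosWave n φ ∈ alternatingIntegralKer a (2 * r) := by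
    have hcos : (fun t => cos (n * t)) ∈ alternatingIntegralKer a (2 * r) := by
      rw [cos_nat_mul_eq_trigMomentCurve (k := 2 * r) (by omega)]
      exact hcomp _
    have hsin : (fun t => sin (n * t)) ∈ alternatingIntegralKer a (2 * r) := by
      rcases Nat.eq_zero_or_pos n with rfl | hn0
      · convert zero_mem (alternatingIntegralKer a (2 * r)) using 2
        simp
      · rw [sin_nat_mul_eq_trigMomentCurve (k := 2 * r) hn0 (by omega)]
        exact hcomp _
    have h : cosWave n φ = cos φ • (fun t => cos (n * t)) - sin φ • fun t => sin (n * t) := by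
      funext t
      simp only [cosWave, Int.cast_natCast, cos_add, Pi.sub_apply, Pi.smul_apply, smul_eq_mul]
      ring
    rw [h]
    exact sub_mem (Submodule.smul_mem _ _ hcos) (Submodule.smul_mem _ _ hsin)
  rw [trigPoly, Submodule.span_le]
  rintro _ ⟨m, φ, hm, rfl⟩
  obtain ⟨n, rfl | rfl⟩ := Int.eq_nat_or_neg m
  · exact hwave n (by simpa using hm) φ
  · rw [cosWave_neg]
    exact hwave n (by simpa using hm) (-φ)

lemma neg_one_pow_sub_mul_prod_pos {f : ℕ → ℝ} {s k : ℕ} (hs : s ≤ k)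
    (hpos : ∀ j < s, 0 < f j) (hneg : ∀ j, s ≤ j → j < k → f j < 0) :
    0 < (-1) ^ (k - s) * ∏ j ∈ range k, f j := by
  rw [← prod_range_mul_prod_Ico f hs, mul_left_comm, ← Nat.card_Ico, ← prod_neg]
  exact mul_pos (prod_pos fun j hj => hpos j (mem_range.1 hj))
    (prod_pos fun j hj => neg_pos.2 (hneg j (mem_Ico.1 hj).1 (mem_Ico.1 hj).2))

lemma neg_one_pow_sub_mul_prod_sin_half_pos {a : ℕ → ℝ} {k s : ℕ} (ha : MonotoneOn a (Set.Iic k))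
    (h0 : a k ≤ a 0 + 2 * π) (h1 : a k ≤ a 1 + 2 * π) (hs : s < k) {t : ℝ}
    (ht : t ∈ Set.Ioo (a s) (a (s + 1))) :
    0 < (-1) ^ (k - s) * ∏ j ∈ range k, sin ((t - a (j + 1)) / 2) := by
  have hle {i j : ℕ} (hij : i ≤ j) (hj : j ≤ k) : a i ≤ a j :=
    ha (Set.mem_Iic.2 (hij.trans hj)) (Set.mem_Iic.2 hj) hij
  refine neg_one_pow_sub_mul_prod_pos hs.le (fun j hj => ?_) (fun j hj hjk => ?_)
  · have hjs : a (j + 1) ≤ a s := hle hj hs.le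
    have h1j : a 1 ≤ a (j + 1) := hle (Nat.le_add_left 1 j) (by omega)
    have hsk : a (s + 1) ≤ a k := hle hs le_rfl
    exact sin_pos_of_pos_of_lt_pi (by linarith [ht.1]) (by linarith [ht.2])
  · have hsj : a (s + 1) ≤ a (j + 1) := hle (Nat.succ_le_succ hj) hjk
    have h0s : a 0 ≤ a s := hle (Nat.zero_le s) hs.le
    have hjk' : a (j + 1) ≤ a k := hle hjk le_rfl
    exact sin_neg_of_neg_of_neg_pi_lt (by linarith [ht.2]) (by linarith [ht.1])

lemma alternatingIntegral_prod_sin_half_pos {a : ℕ → ℝ} {k : ℕ} (hk : Even k)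
    (ha : MonotoneOn a (Set.Iic k)) (h0 : a k = a 0 + 2 * π) (h1 : a k ≤ a 1 + 2 * π) :
    0 < alternatingIntegral a k (fun t => ∏ j ∈ range k, sin ((t - a (j + 1)) / 2)) := by
  have hP : Continuous (fun t => ∏ j ∈ range k, sin ((t - a (j + 1)) / 2)) := by fun_prop
  have hterm_pos {s : ℕ} (hs : s < k) (hlt : a s < a (s + 1)) :
      0 < (-1) ^ s * ∫ t in a s..a (s + 1), ∏ j ∈ range k, sin ((t - a (j + 1)) / 2) := by
    rw [← intervalIntegral.integral_const_mul]
    refine intervalIntegral.intervalIntegral_pos_of_pos_on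
      ((continuous_const.mul hP).intervalIntegrable _ _) (fun t ht => ?_) hlt
    have hpar : (-1 : ℝ) ^ s = (-1) ^ (k - s) := by
      rw [neg_one_pow_eq_pow_mod_two, neg_one_pow_eq_pow_mod_two (n := k - s)]
      obtain ⟨r, rfl⟩ := hk
      congr 1
      omega
    rw [hpar]
    exact neg_one_pow_sub_mul_prod_sin_half_pos ha h0.le h1 hs ht
  obtain ⟨s, hs, hlt⟩ : ∃ s ∈ range k, a s < a (s + 1) := by
    refine exists_lt_of_sum_lt ?_
    have := sum_range_sub a k
    rw [sum_sub_distrib] at this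
    linarith [pi_pos]
  refine sum_pos' (fun s hs => ?_) ⟨s, hs, hterm_pos (mem_range.1 hs) hlt⟩
  have hs : s < k := mem_range.1 hs
  rcases (ha (Set.mem_Iic.2 hs.le) (Set.mem_Iic.2 hs) s.le_succ).eq_or_lt with heq | hlt
  · rw [heq, intervalIntegral.integral_same, mul_zero]
  · exact (hterm_pos hs hlt).le

end

/-- For `k = 2r`, `w` the trigonometric moment curve in `ℝ^{k+1}`, and any
weakly increasing `a_1 ≤ … ≤ a_k` with `a_k ≤ a_1 + 2π` and `a_0 = a_k − 2π`, the
alternating sum `∑_{s=0}^{k-1} (-1)^s ∫_{a_s}^{a_{s+1}} w(t) dt` is nonzero. -/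
theorem stmt4 (r : ℕ) (k : ℕ) (hk : k = 2 * r)
    (a : ℕ → ℝ)
    (hmono : ∀ s, 1 ≤ s → s < k → a s ≤ a (s + 1))
    (hlen : a k ≤ a 1 + 2 * Real.pi)
    (h0 : a 0 = a k - 2 * Real.pi) :
    (∑ s ∈ Finset.range k,
        ((-1 : ℝ) ^ s) • (∫ t in (a s)..(a (s + 1)), trigMomentCurve k t)) ≠ 0 := by
  subst hk
  intro hS
  have ha : MonotoneOn a (Set.Iic (2 * r)) := by
    refine monotoneOn_of_le_add_one Set.ordConnected_Iic fun s _ _ hs => ?_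
    rcases Nat.eq_zero_or_pos s with rfl | hs0
    · rw [zero_add, h0]
      linarith
    · exact hmono s hs0 (Set.mem_Iic.1 hs)
  have hker := trigPoly_le_alternatingIntegralKer hS (prod_sin_half_mem_trigPoly (a <| · + 1) r)
  exact (alternatingIntegral_prod_sin_half_pos (even_two_mul r) ha (by linarith) hlen).ne' hker.2
end

section
/- Let m = 2n+k, ξ = exp(2πi/m), and for x = (x_0, x_1, …, x_r) ∈ ℝ × ℂ^r define the polynomial p(z) = x_r + x_{r-1} z + … + x_1 z^{r-1} + 2x_0 z^r + conj(x_1) z^{r+1} + … + conj(x_r) z^{2r}. Then for v_j = (1, ξ^j, ξ^{2j}, …, ξ^{rj}) ∈ ℝ × ℂ^r, the real inner product ⟨x, v_j⟩ vanishes if and only if p(ξ^j) = 0. In particular, if x ≠ 0 then ⟨x, v_j⟩ = 0 for at most 2r values of j ∈ {0,…,m-1}. -/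
/-!
On the unit circle `conj z = z⁻¹`, so the coefficient pairs `x_i z^(r-i) + conj x_i z^(r+i)` of
`p` combine to `z^r · 2 Re (x_i conj z^i)`; hence `p z = 2 z^r ⟨x, (1, z, …, z^r)⟩` whenever
`|z| = 1`. For `x ≠ 0` the polynomial `p` is nonzero (its coefficients are `x_r, …, x_1, 2x_0`
and their conjugates) of degree at most `2r`, so it has at most `2r` roots, and the powers
`ξ^j`, `0 ≤ j < m`, are distinct.
-/

open scoped Classical

open Polynomial ComplexConjugate

theorem Complex.injOn_pow_exp_two_pi_I_div (m : ℕ) :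
    Set.InjOn (fun j : ℕ => exp (2 * Real.pi * I / m) ^ j) (Finset.range m) := by
  rcases Nat.eq_zero_or_pos m with rfl | hm
  · simp
  · intro a ha b hb hab
    exact (isPrimitiveRoot_exp m hm.ne').pow_inj (by simpa using ha) (by simpa using hb) hab

theorem Complex.norm_exp_two_pi_I_div (m : ℕ) : ‖exp (2 * Real.pi * I / m)‖ = 1 := by
  rw [norm_exp]
  simp

theorem Complex.mul_pow_sub_add_conj_mul_pow_add {z : ℂ} (hz : ‖z‖ = 1) (w : ℂ) {l r : ℕ}
    (hl : l ≤ r) :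
    w * z ^ (r - l) + conj w * z ^ (r + l) = z ^ r * ↑(2 * (w * conj (z ^ l)).re) := by
  have hconj : conj (z ^ l) * z ^ l = 1 := by
    rw [map_pow, ← mul_pow, conj_mul', hz]; simp
  have hsub : z ^ (r - l) = z ^ r * conj (z ^ l) := by
    rw [← Nat.sub_add_cancel hl, pow_add, Nat.add_sub_cancel, mul_assoc, mul_comm (z ^ l), hconj,
      mul_one]
  rw [← add_conj, hsub, pow_add, map_mul, conj_conj]
  ring

theorem Polynomial.card_le_natDegree_of_injOn_isRoot {ι R : Type*} [CommRing R] [IsDomain R]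
    {p : R[X]} (hp : p ≠ 0) {s : Finset ι} {f : ι → R} (hf : Set.InjOn f s)
    (hroot : ∀ i ∈ s, p.IsRoot (f i)) : s.card ≤ p.natDegree := by
  rw [← Finset.card_image_of_injOn hf]
  refine card_le_degree_of_subset_roots fun z hz => ?_
  obtain ⟨i, hi, rfl⟩ := Finset.mem_image.mp hz
  exact (mem_roots hp).mpr (hroot i hi)

section SelfInversive

variable {r : ℕ}

def realInner (x y : ℝ × (Fin r → ℂ)) : ℝ :=
  x.1 * y.1 + ∑ i, (x.2 i * conj (y.2 i)).re

def powVector (z : ℂ) : ℝ × (Fin r → ℂ) :=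
  (1, fun i => z ^ ((i : ℕ) + 1))

noncomputable def selfInversivePoly (x : ℝ × (Fin r → ℂ)) : ℂ[X] :=
  C (2 * (x.1 : ℂ)) * X ^ r +
    ∑ i : Fin r, (C (x.2 i) * X ^ (r - (i + 1)) + C (conj (x.2 i)) * X ^ (r + (i + 1)))

theorem coeff_selfInversivePoly_self (x : ℝ × (Fin r → ℂ)) :
    (selfInversivePoly x).coeff r = 2 * x.1 := by
  have hne : ∀ i : Fin r, r ≠ r - (i + 1) ∧ r ≠ r + (i + 1) := fun i => by omega
  simp only [selfInversivePoly, coeff_add, finsetSum_coeff, coeff_C_mul_X_pow]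
  simp [hne]

theorem coeff_selfInversivePoly_sub (x : ℝ × (Fin r → ℂ)) (i : Fin r) :
    (selfInversivePoly x).coeff (r - (i + 1)) = x.2 i := by
  have hne : ∀ j : Fin r, (r - (i + 1) = r - (j + 1) ↔ j = i) ∧ r - (i + 1) ≠ r + (j + 1) :=
    fun j => ⟨by omega, by omega⟩
  have hr : r - (i + 1) ≠ r := by omega
  simp only [selfInversivePoly, coeff_add, finsetSum_coeff, coeff_C_mul_X_pow]
  simp [hne, hr]

theorem selfInversivePoly_ne_zero {x : ℝ × (Fin r → ℂ)} (hx : x ≠ 0) :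
    selfInversivePoly x ≠ 0 := by
  contrapose! hx
  refine Prod.ext ?_ (funext fun i => ?_)
  · simpa [coeff_selfInversivePoly_self] using congrArg (coeff · r) hx
  · simpa [coeff_selfInversivePoly_sub] using congrArg (coeff · (r - (i + 1))) hx

theorem natDegree_selfInversivePoly_le (x : ℝ × (Fin r → ℂ)) :
    (selfInversivePoly x).natDegree ≤ 2 * r := by
  unfold selfInversivePoly
  refine natDegree_add_le_of_degree_le ?_ (natDegree_sum_le_of_forall_le _ _ fun i _ => ?_)
  · exact (natDegree_C_mul_X_pow_le _ _).trans (by omega)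
  · exact natDegree_add_le_of_degree_le ((natDegree_C_mul_X_pow_le _ _).trans (by omega))
      ((natDegree_C_mul_X_pow_le _ _).trans (by omega))


theorem eval_selfInversivePoly (x : ℝ × (Fin r → ℂ)) (z : ℂ) :
    (selfInversivePoly x).eval z = 2 * (x.1 : ℂ) * z ^ r +
      ∑ i : Fin r, (x.2 i * z ^ (r - (i + 1)) + conj (x.2 i) * z ^ (r + (i + 1))) := by
  simp [selfInversivePoly, eval_finsetSum]

theorem eval_selfInversivePoly_of_norm_eq_one (x : ℝ × (Fin r → ℂ)) {z : ℂ}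
    (hz : ‖z‖ = 1) :
    (selfInversivePoly x).eval z = 2 * z ^ r * realInner x (powVector z) := by
  rw [eval_selfInversivePoly, Finset.sum_congr rfl fun i _ =>
    Complex.mul_pow_sub_add_conj_mul_pow_add hz (x.2 i) i.isLt]
  simp only [realInner, powVector]
  push_cast
  rw [mul_add, Finset.mul_sum]
  congr 1
  · ring
  · exact Finset.sum_congr rfl fun i _ => by ring

theorem selfInversivePoly_isRoot_iff (x : ℝ × (Fin r → ℂ)) {z : ℂ} (hz : ‖z‖ = 1) :
    (selfInversivePoly x).IsRoot z ↔ realInner x (powVector z) = 0 := by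
  have hz0 : z ≠ 0 := norm_ne_zero_iff.mp (hz ▸ one_ne_zero)
  simp [IsRoot, eval_selfInversivePoly_of_norm_eq_one x hz, hz0]

end SelfInversive

theorem stmt6_general (r m : ℕ) (x : ℝ × (Fin r → ℂ)) :
    let ξ : ℂ := Complex.exp (2 * (Real.pi : ℂ) * Complex.I / (m : ℂ))
    let v : ℕ → ℝ × (Fin r → ℂ) := fun j => (1, fun i => ξ ^ (((i : ℕ) + 1) * j))
    let ip : (ℝ × (Fin r → ℂ)) → (ℝ × (Fin r → ℂ)) → ℝ := fun x y =>
      x.1 * y.1 + ∑ i, (x.2 i * (starRingEnd ℂ) (y.2 i)).re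
    let p : ℂ → ℂ := fun z => 2 * (x.1 : ℂ) * z ^ r +
      ∑ i : Fin r, (x.2 i * z ^ (r - ((i : ℕ) + 1))
        + (starRingEnd ℂ) (x.2 i) * z ^ (r + ((i : ℕ) + 1)))
    (∀ j < m, (ip x (v j) = 0 ↔ p (ξ ^ j) = 0)) ∧
      (x ≠ 0 → ((Finset.range m).filter fun j => ip x (v j) = 0).card ≤ 2 * r) := by
  intro ξ v ip p
  have hξ : ∀ j, ‖ξ ^ j‖ = 1 := fun j => by
    rw [norm_pow, Complex.norm_exp_two_pi_I_div, one_pow]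
  have hip : ∀ j, ip x (v j) = realInner x (powVector (ξ ^ j)) := fun j => by
    simp only [ip, v, realInner, powVector, pow_mul']
  have hroot : ∀ j, (selfInversivePoly x).IsRoot (ξ ^ j) ↔ ip x (v j) = 0 := fun j => by
    rw [hip, selfInversivePoly_isRoot_iff x (hξ j)]
  refine ⟨fun j _ => by rw [← hroot, IsRoot.def, eval_selfInversivePoly], fun hx => ?_⟩
  calc _ ≤ (selfInversivePoly x).natDegree :=
        card_le_natDegree_of_injOn_isRoot (selfInversivePoly_ne_zero hx)
          ((Complex.injOn_pow_exp_two_pi_I_div m).mono (Finset.filter_subset _ _))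
          fun j hj => (hroot j).mpr (Finset.mem_filter.mp hj).2
    _ ≤ 2 * r := natDegree_selfInversivePoly_le x

/-- With `m = 2n+k`, `k = 2r`, `ξ = exp(2πi/m)`,
`v_j = (1, ξ^j, …, ξ^{rj}) ∈ ℝ × ℂ^r`, and
`p(z) = x_r + x_{r-1}z + … + x_1 z^{r-1} + 2x_0 z^r + conj(x_1)z^{r+1} + … + conj(x_r)z^{2r}`,
the real inner product `⟨x, v_j⟩` vanishes iff `p(ξ^j) = 0`; in particular for `x ≠ 0`
it vanishes for at most `2r` values of `j ∈ {0,…,m-1}`. -/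
theorem stmt6 (n k r m : ℕ) (hk : k = 2 * r) (hm : m = 2 * n + k) (hkm : k < m)
    (x : ℝ × (Fin r → ℂ)) :
    let ξ : ℂ := Complex.exp (2 * (Real.pi : ℂ) * Complex.I / (m : ℂ))
    let v : ℕ → ℝ × (Fin r → ℂ) := fun j => (1, fun i => ξ ^ (((i : ℕ) + 1) * j))
    let ip : (ℝ × (Fin r → ℂ)) → (ℝ × (Fin r → ℂ)) → ℝ := fun x y =>
      x.1 * y.1 + ∑ i, (x.2 i * (starRingEnd ℂ) (y.2 i)).re
    let p : ℂ → ℂ := fun z => 2 * (x.1 : ℂ) * z ^ r +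
      ∑ i : Fin r, (x.2 i * z ^ (r - ((i : ℕ) + 1))
        + (starRingEnd ℂ) (x.2 i) * z ^ (r + ((i : ℕ) + 1)))
    (∀ j < m, (ip x (v j) = 0 ↔ p (ξ ^ j) = 0)) ∧
      (x ≠ 0 → ((Finset.range m).filter fun j => ip x (v j) = 0).card ≤ 2 * r) :=
  stmt6_general r m x
end

section
/- Let w(ξ) be an invertible element of total degree 0 leading term 1 in a graded ℤ/2-algebra, interpreted as a total Stiefel-Whitney class, and let w̄ = w^{-1}. In ℤ/2[α] with deg α = 1, for w = (1+α)^{r+1} with r ≡ 2^a (mod 2^{a+1}), all homogeneous components of w̄ = (1+α)^{-(r+1)} in degrees d with 2^a ≤ d < 2^{a+1} vanish. -/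
/-!
Since `r + 2^a ≡ 0 (mod 2^(a+1))` and `(1 + α)^(2^(a+1)) = 1 + α^(2^(a+1))` in characteristic 2,
`(1 + α)^(r+1) · (1 + α)^(2^a - 1)` is a power of `1 + α^(2^(a+1))`, hence `≡ 1` modulo
`α^(2^(a+1))`, and so is its inverse. Below degree `2^(a+1)` the series `(1 + α)^(-(r+1))`
therefore agrees with the polynomial `(1 + α)^(2^a - 1)`, which has degree `< 2^a`.
-/

open PowerSeries

namespace PowerSeries

instance instCharP {R : Type*} [Semiring R] (p : ℕ) [CharP R p] : CharP R⟦X⟧ p :=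
  charP_of_injective_ringHom C_injective p

theorem coeff_one_add_X_pow {R : Type*} [CommSemiring R] (n d : ℕ) :
    coeff d ((1 + X : R⟦X⟧) ^ n) = n.choose d := by
  have h : ((1 + Polynomial.X : Polynomial R) ^ n : Polynomial R) = (1 + X : R⟦X⟧) ^ n := by
    simp
  rw [← h, Polynomial.coeff_coe, Polynomial.coeff_one_add_X_pow]

theorem one_add_X_pow_char_pow {R : Type*} [CommSemiring R] (p k : ℕ) [Fact p.Prime]
    [CharP R p] : (1 + X : R⟦X⟧) ^ p ^ k = 1 + X ^ p ^ k := by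
  rw [add_pow_char_pow, one_pow]

section CommRing

variable {R : Type*} [CommRing R]

theorem X_pow_dvd_one_add_X_pow_pow_sub_one (m n : ℕ) :
    (X : R⟦X⟧) ^ m ∣ (1 + X ^ m) ^ n - 1 := by
  have h := sub_dvd_pow_sub_pow (1 + X ^ m : R⟦X⟧) 1 n
  rwa [add_sub_cancel_left, one_pow] at h

theorem coeff_mul_of_X_pow_dvd_sub_one {m : ℕ} {f g : R⟦X⟧} (hg : X ^ m ∣ g - 1) {d : ℕ}
    (hd : d < m) : coeff d (f * g) = coeff d f := by
  have hfg : X ^ m ∣ f * g - f := by simpa [mul_sub] using dvd_mul_of_dvd_right hg f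
  exact sub_eq_zero.mp (by simpa using X_pow_dvd_iff.mp hfg d hd)

end CommRing

theorem X_pow_dvd_inv_sub_one {k : Type*} [Field k] {m : ℕ} {g : k⟦X⟧}
    (hg : X ^ m ∣ g - 1) : X ^ m ∣ g⁻¹ - 1 := by
  rcases Nat.eq_zero_or_pos m with rfl | hm
  · simp
  have hg0 : constantCoeff g = 1 := by
    simpa [sub_eq_zero] using X_pow_dvd_iff.mp hg 0 hm
  have hsub : g⁻¹ - 1 = -(g⁻¹ * (g - 1)) := by
    rw [mul_sub, mul_comm, PowerSeries.mul_inv_cancel g (by simp [hg0])]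
    ring
  rw [hsub, dvd_neg]
  exact dvd_mul_of_dvd_right hg _

end PowerSeries

/-- In `ℤ/2[[α]]`, for `w = (1+α)^{r+1}` with `r ≡ 2^a (mod 2^{a+1})`,
all coefficients of `w̄ = (1+α)^{-(r+1)}` in degrees `d` with `2^a ≤ d < 2^{a+1}`
vanish. -/
theorem stmt9 (r a : ℕ) (hr : r % 2 ^ (a + 1) = 2 ^ a)
    (d : ℕ) (h1 : 2 ^ a ≤ d) (h2 : d < 2 ^ (a + 1)) :
    PowerSeries.coeff (R := ZMod 2) d
      (((1 + PowerSeries.X : PowerSeries (ZMod 2)) ^ (r + 1))⁻¹) = 0 := by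
  set m := 2 ^ (a + 1)
  have hm : m = 2 * 2 ^ a := pow_succ' 2 a
  have hexp : r + 1 + (2 ^ a - 1) = m * (r / m + 1) := by
    have hdiv := Nat.div_add_mod r m
    have hpos : 0 < 2 ^ a := Nat.two_pow_pos a
    rw [mul_add, mul_one]
    omega
  have hprod : (1 + X : (ZMod 2)⟦X⟧) ^ (r + 1) * (1 + X) ^ (2 ^ a - 1) =
      (1 + X ^ m) ^ (r / m + 1) := by
    rw [← pow_add, hexp, pow_mul, one_add_X_pow_char_pow]
  have hinv : ((1 + X : (ZMod 2)⟦X⟧) ^ (r + 1))⁻¹ =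
      (1 + X) ^ (2 ^ a - 1) * ((1 + X ^ m) ^ (r / m + 1))⁻¹ := by
    rw [← hprod, PowerSeries.mul_inv_rev, ← mul_assoc,
      PowerSeries.mul_inv_cancel _ (by simp), one_mul]
  rw [hinv, coeff_mul_of_X_pow_dvd_sub_one
      (X_pow_dvd_inv_sub_one (X_pow_dvd_one_add_X_pow_pow_sub_one m _)) h2,
    coeff_one_add_X_pow, Nat.choose_eq_zero_of_lt (by omega), Nat.cast_zero]
end

section
/- Let ξ be a real vector bundle of rank k+1 over a space X, let H*(P(E); ℤ/2) be the mod-2 cohomology of its projectivization, a free module over H*(X; ℤ/2) with basis 1, t, …, t^k where t satisfies ∑_{r=0}^{k+1} w_{k+1-r}(ξ) t^r = 0. If for ℓ ≥ 0 one writes t^{k+ℓ} = ∑_{j=0}^k s_{j,ℓ+k-j} t^j with s_{j,r} ∈ H^r(X; ℤ/2), then s_{k,r} = w̄_r(ξ), the degree-r component of the inverse of the total Stiefel-Whitney class. Equivalently, as a purely algebraic statement: in a commutative ℤ/2-algebra A (complete graded), let w = 1 + w_1 + … + w_{k+1} and consider the quotient ring A[t]/(t^{k+1} + w_1 t^k +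 … + w_{k+1}). Writing t^{k+ℓ} in the basis 1, t, …, t^k, the coefficient of t^k in t^{k+ℓ} equals the degree-ℓ component of w^{-1}. -/
/-!
Let `c m` be the coefficient of `t ^ k` in the reduction of `t ^ m` modulo the monic relation
`p = ∑ w i * t ^ (k + 1 - i)`. By linearity, `∑ i, w i * c (m - i)` is the coefficient of `t ^ k`
in the reduction of `∑ i ≤ m, w i * t ^ (m - i)`. For `m ≤ k` this polynomial is already reduced,
giving `δ m k`; for `m > k` it is `t ^ (m - k - 1) * p`, giving `0`. Hence
`(∑ w i X ^ i) * (∑ c m X ^ m) = X ^ k` as power series, so `∑ c m X ^ m = X ^ k * w⁻¹` and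
`c (k + ℓ) = wbar ℓ`.
-/

open Finset

namespace Polynomial

section Semiring

variable {R : Type*} [Semiring R]

noncomputable def revPoly (n : ℕ) (a : ℕ → R) : R[X] :=
  ∑ i ∈ range (n + 1), C (a i) * X ^ (n - i)

theorem coeff_revPoly (n : ℕ) (a : ℕ → R) (j : ℕ) :
    (revPoly n a).coeff j = if j ≤ n then a (n - j) else 0 := by
  simp only [revPoly, finsetSum_coeff, coeff_C_mul_X_pow]
  split_ifs with hj
  · rw [Finset.sum_eq_single (n - j)]
    · simp [Nat.sub_sub_self hj]
    · intro i hi hne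
      rw [if_neg]
      simp only [mem_range] at hi
      omega
    · simp only [mem_range]; omega
  · refine Finset.sum_eq_zero fun i _ => if_neg ?_
    omega

theorem natDegree_revPoly_le (n : ℕ) (a : ℕ → R) : (revPoly n a).natDegree ≤ n :=
  natDegree_le_iff_coeff_eq_zero.mpr fun j hj => by
    rw [coeff_revPoly, if_neg (by simpa using hj)]

theorem revPoly_monic {n : ℕ} {a : ℕ → R} (ha : a 0 = 1) : (revPoly n a).Monic :=
  monic_of_natDegree_le_of_coeff_eq_one n (natDegree_revPoly_le n a) (by simp [coeff_revPoly, ha])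

theorem natDegree_revPoly [Nontrivial R] {n : ℕ} {a : ℕ → R} (ha : a 0 = 1) :
    (revPoly n a).natDegree = n :=
  natDegree_eq_of_le_of_coeff_ne_zero (natDegree_revPoly_le n a) (by simp [coeff_revPoly, ha])

theorem revPoly_eq_X_pow_mul {n m : ℕ} {a : ℕ → R} (hnm : n ≤ m) (ha : ∀ i, n < i → a i = 0) :
    revPoly m a = X ^ (m - n) * revPoly n a := by
  ext j
  rw [coeff_X_pow_mul', coeff_revPoly, coeff_revPoly]
  split_ifs <;> first | rfl | omega | (congr 1; omega) | exact ha _ (by omega)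

end Semiring

variable {R : Type*} [CommRing R]

theorem coeff_revPoly_modByMonic (n : ℕ) (a : ℕ → R) (q : R[X]) (j : ℕ) :
    (revPoly n a %ₘ q).coeff j = ∑ i ∈ range (n + 1), a i * (X ^ (n - i) %ₘ q).coeff j := by
  rw [revPoly, ← modByMonicHom_apply, map_sum, finsetSum_coeff]
  refine Finset.sum_congr rfl fun i _ => ?_
  rw [← smul_eq_C_mul, map_smul, coeff_smul, smul_eq_mul, modByMonicHom_apply]

theorem modByMonic_eq_of_dvd_sub_of_degree_lt {f q r : R[X]} (hq : q.Monic) (h : q ∣ f - r)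
    (hr : r.degree < q.degree) : f %ₘ q = r := by
  obtain ⟨g, hg⟩ := h
  exact (div_modByMonic_unique g r hq ⟨by rw [← hg]; ring, hr⟩).2

end Polynomial

namespace PowerSeries

variable {R : Type*} [CommRing R]

theorem coeff_mk_mul_mk (a b : ℕ → R) (n : ℕ) :
    coeff n (mk a * mk b) = ∑ i ∈ range (n + 1), a i * b (n - i) := by
  rw [coeff_mul,
    Finset.Nat.sum_antidiagonal_eq_sum_range_succ (fun i j => coeff i (mk a) * coeff j (mk b))]
  simp only [coeff_mk]

open Polynomial in
theorem mk_mul_mk_coeff_X_pow_modByMonic_revPoly {n : ℕ} {a : ℕ → R} (ha0 : a 0 = 1)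
    (ha : ∀ i, n + 1 < i → a i = 0) :
    mk a * mk (fun m => (Polynomial.X ^ m %ₘ revPoly (n + 1) a).coeff n) = X ^ n := by
  nontriviality R
  ext M
  rw [coeff_mk_mul_mk, ← coeff_revPoly_modByMonic, coeff_X_pow]
  rcases le_or_gt M n with hM | hM
  · have hdeg : (revPoly M a).degree < (revPoly (n + 1) a).degree :=
      degree_lt_degree ((natDegree_revPoly_le M a).trans_lt (by rw [natDegree_revPoly ha0]; omega))
    rw [(modByMonic_eq_self_iff (revPoly_monic ha0)).2 hdeg, coeff_revPoly]
    rcases hM.lt_or_eq with hlt | rfl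
    · rw [if_neg hlt.not_ge, if_neg hlt.ne]
    · simp [ha0]
  · rw [revPoly_eq_X_pow_mul hM ha, mul_self_modByMonic (revPoly_monic ha0), coeff_zero,
      if_neg (by omega)]

end PowerSeries

open Polynomial

theorem stmt11_general (k : ℕ) (A : Type*) [CommRing A]
    (w wbar : ℕ → A) (hw0 : w 0 = 1) (hwtop : ∀ i, k + 1 < i → w i = 0)
    (hconv : ∀ N : ℕ,
      (∑ i ∈ Finset.range (N + 1), w i * wbar (N - i)) = if N = 0 then 1 else 0)
    (ℓ : ℕ) (s : ℕ → A)
    (hs : (Polynomial.X ^ (k + ℓ)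
        - ∑ j ∈ Finset.range (k + 1), Polynomial.C (s j) * Polynomial.X ^ j :
        Polynomial A) ∈
      Ideal.span {∑ i ∈ Finset.range (k + 2),
        Polynomial.C (w i) * Polynomial.X ^ (k + 1 - i)}) :
    s k = wbar ℓ := by
  nontriviality A
  change _ ∈ Ideal.span {revPoly (k + 1) w} at hs
  have hdeg : (∑ j ∈ range (k + 1), C (s j) * X ^ j).natDegree < (revPoly (k + 1) w).natDegree := by
    rw [natDegree_revPoly hw0, Nat.lt_succ_iff]
    exact natDegree_sum_le_of_forall_le _ _ fun j hj =>
      (natDegree_C_mul_X_pow_le _ _).trans (Nat.lt_succ_iff.mp (mem_range.mp hj))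
  have hrem : X ^ (k + ℓ) %ₘ revPoly (k + 1) w = ∑ j ∈ range (k + 1), C (s j) * X ^ j :=
    modByMonic_eq_of_dvd_sub_of_degree_lt (revPoly_monic hw0) (Ideal.mem_span_singleton.mp hs)
      (degree_lt_degree hdeg)
  have hinv : PowerSeries.mk wbar * PowerSeries.mk w = 1 := by
    ext N
    rw [mul_comm, PowerSeries.coeff_mk_mul_mk, hconv, PowerSeries.coeff_one]
  calc s k = PowerSeries.coeff (ℓ + k)
        (PowerSeries.mk fun m => (X ^ m %ₘ revPoly (k + 1) w).coeff k) := by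
        simp [add_comm ℓ, hrem, finsetSum_coeff]
    _ = PowerSeries.coeff (ℓ + k) (PowerSeries.mk wbar * PowerSeries.X ^ k) := by
        rw [← PowerSeries.mk_mul_mk_coeff_X_pow_modByMonic_revPoly hw0 hwtop, ← mul_assoc, hinv,
          one_mul]
    _ = wbar ℓ := by rw [PowerSeries.coeff_mul_X_pow, PowerSeries.coeff_mk]

/-- algebraic form: Let `A` be a commutative `ℤ/2`-algebra with
elements `w 0 = 1, w 1, …, w (k+1)` (a total Stiefel–Whitney class) and `wbar` its
formal inverse (`∑_{i+j=n} w i ⬝ wbar j = δ_{n,0}`, with `w i = 0` for `i > k+1`).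
If, modulo the monic relation `∑_{i=0}^{k+1} w i · t^{k+1-i}`, one writes
`t^{k+ℓ} = ∑_{j=0}^{k} s j · t^j`, then the coefficient `s k` of `t^k` equals
`wbar ℓ`. -/
theorem stmt11 (k : ℕ) (A : Type*) [CommRing A] [Algebra (ZMod 2) A]
    (w wbar : ℕ → A) (hw0 : w 0 = 1) (hwtop : ∀ i, k + 1 < i → w i = 0)
    (hconv : ∀ N : ℕ,
      (∑ i ∈ Finset.range (N + 1), w i * wbar (N - i)) = if N = 0 then 1 else 0)
    (ℓ : ℕ) (s : ℕ → A)
    (hs : (Polynomial.X ^ (k + ℓ)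
        - ∑ j ∈ Finset.range (k + 1), Polynomial.C (s j) * Polynomial.X ^ j :
        Polynomial A) ∈
      Ideal.span {∑ i ∈ Finset.range (k + 2),
        Polynomial.C (w i) * Polynomial.X ^ (k + 1 - i)}) :
    s k = wbar ℓ :=
  stmt11_general k A w wbar hw0 hwtop hconv ℓ s hs
end

section
/- Let T be a graph with a right action of a group Γ. Then the following are equivalent: (1) for every loopless graph G, the induced action of Γ on the set of graph homomorphisms from T to G is free; (2) for every γ ∈ Γ with γ ≠ 1, there exist a vertex v of T and an integer k ≥ 0 such that v and v·γ^k are adjacent in T. -/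
/-! If `γ ≠ 1` fixes a homomorphism `f`, then `f` is constant on the `⟨γ⟩`-orbits, so an edge
`v ~ v·γ^k` would map to a loop of `G`. Conversely, if no `⟨γ⟩`-orbit contains an edge, the
quotient map `T → T/⟨γ⟩` is a homomorphism into a loopless graph, and it is fixed by `γ`. The
orbits involve all integer powers of `γ`; negative ones reduce to nonnegative ones by symmetry of
adjacency. -/

universe u

namespace Relation

variable {α β : Type*} {r : α → α → Prop}

theorem symmetric_map (hr : Symmetric r) (f : α → β) : Symmetric (Relation.Map r f f) := by
  rintro _ _ ⟨a, b, hab, rfl, rfl⟩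
  exact ⟨b, a, hr hab, rfl, rfl⟩

theorem irreflexive_map_quotientMk {s : Setoid α} (h : ∀ a b, s a b → ¬ r a b) :
    Irreflexive (Relation.Map r (Quotient.mk s) (Quotient.mk s)) := by
  rintro _ ⟨a, b, hab, rfl, hba⟩
  exact h a b (Quotient.exact hba.symm) hab

end Relation

section RightAction

variable {V Γ : Type*} [Group Γ] {act : Γ → V → V}

theorem act_zpow_neg_act (hact1 : ∀ v, act 1 v = v)
    (hactmul : ∀ γ δ v, act (γ * δ) v = act δ (act γ v)) (γ : Γ) (n : ℤ) (v : V) :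
    act (γ ^ (-n)) (act (γ ^ n) v) = v := by
  rw [← hactmul, ← zpow_add, add_neg_cancel, zpow_zero, hact1]

def zpowersOrbitSetoid (hact1 : ∀ v, act 1 v = v)
    (hactmul : ∀ γ δ v, act (γ * δ) v = act δ (act γ v)) (γ : Γ) : Setoid V where
  r u v := ∃ n : ℤ, v = act (γ ^ n) u
  iseqv :=
    { refl := fun u => ⟨0, by rw [zpow_zero, hact1]⟩
      symm := by
        rintro u _ ⟨n, rfl⟩
        exact ⟨-n, (act_zpow_neg_act hact1 hactmul γ n u).symm⟩
      trans := by
        rintro u _ _ ⟨n, rfl⟩ ⟨m, rfl⟩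
        exact ⟨n + m, by rw [zpow_add, hactmul]⟩ }

theorem not_adj_act_zpow {adj : V → V → Prop} (hsym : Symmetric adj)
    (hact1 : ∀ v, act 1 v = v) (hactmul : ∀ γ δ v, act (γ * δ) v = act δ (act γ v)) {γ : Γ}
    (h : ∀ (v : V) (k : ℕ), ¬ adj v (act (γ ^ k) v)) (n : ℤ) (v : V) :
    ¬ adj v (act (γ ^ n) v) := by
  obtain ⟨k, rfl | rfl⟩ := Int.eq_nat_or_neg n
  · exact_mod_cast h v k
  · intro hadj
    have hv : act (γ ^ (k : ℤ)) (act (γ ^ (-(k : ℤ))) v) = v := by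
      simpa using act_zpow_neg_act hact1 hactmul γ (-k) v
    refine h (act (γ ^ (-(k : ℤ))) v) k ?_
    rw [← zpow_natCast, hv]
    exact hsym hadj

theorem apply_act_pow_eq {W : Type*} (hact1 : ∀ v, act 1 v = v)
    (hactmul : ∀ γ δ v, act (γ * δ) v = act δ (act γ v)) {f : V → W} {γ : Γ}
    (hfix : ∀ v, f (act γ v) = f v) (k : ℕ) (v : V) : f (act (γ ^ k) v) = f v := by
  induction k generalizing v with
  | zero => rw [pow_zero, hact1]
  | succ k ih => rw [pow_succ, hactmul, hfix, ih]

end RightAction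

theorem stmt12_general {V : Type u} (Γ : Type u) [Group Γ]
    (adjT : V → V → Prop) (hsym : Symmetric adjT)
    (act : Γ → V → V)
    (hact1 : ∀ v, act 1 v = v)
    (hactmul : ∀ γ δ v, act (γ * δ) v = act δ (act γ v)) :
    (∀ (W : Type u) (adjG : W → W → Prop), Symmetric adjG → Irreflexive adjG →
        ∀ f : V → W, (∀ u v, adjT u v → adjG (f u) (f v)) →
          ∀ γ : Γ, (∀ v, f (act γ v) = f v) → γ = 1)
      ↔ (∀ γ : Γ, γ ≠ 1 → ∃ (v : V) (k : ℕ), adjT v (act (γ ^ k) v)) := by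
  constructor
  · intro hfree γ hγ
    by_contra! hno
    let s := zpowersOrbitSetoid hact1 hactmul γ
    have hloopless : Irreflexive (Relation.Map adjT (Quotient.mk s) (Quotient.mk s)) :=
      Relation.irreflexive_map_quotientMk fun u _ ⟨n, hn⟩ =>
        hn ▸ not_adj_act_zpow hsym hact1 hactmul hno n u
    refine hγ (hfree _ _ (Relation.symmetric_map hsym _) hloopless (Quotient.mk s)
      (fun u v h => ⟨u, v, h, rfl, rfl⟩) γ fun v => Quotient.sound ⟨-1, ?_⟩)
    rw [zpow_neg_one, ← hactmul, mul_inv_cancel, hact1]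
  · rintro h W adjG - hirr f hf γ hfix
    by_contra hγ
    obtain ⟨v, k, hadj⟩ := h γ hγ
    exact hirr (f v) (apply_act_pow_eq hact1 hactmul hfix k v ▸ hf v _ hadj)

/-- For a graph `T` (vertices `V`, symmetric adjacency `adjT`) with a right
action of a group `Γ` by graph automorphisms, the following are equivalent:
(1) for every loopless graph `G`, the induced `Γ`-action on graph homomorphisms
`T → G` (by `(γ·f)(v) = f(v·γ)`) is free;
(2) for every `γ ≠ 1` there are a vertex `v` and `k ≥ 0` with `v` adjacent to `v·γ^k`. -/
theorem stmt12 {V : Type u} (Γ : Type u) [Group Γ]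
    (adjT : V → V → Prop) (hsym : Symmetric adjT)
    (act : Γ → V → V)
    (hact1 : ∀ v, act 1 v = v)
    (hactmul : ∀ γ δ v, act (γ * δ) v = act δ (act γ v))
    (hequiv : ∀ γ u v, adjT u v → adjT (act γ u) (act γ v)) :
    (∀ (W : Type u) (adjG : W → W → Prop), Symmetric adjG → Irreflexive adjG →
        ∀ f : V → W, (∀ u v, adjT u v → adjG (f u) (f v)) →
          ∀ γ : Γ, (∀ v, f (act γ v) = f v) → γ = 1)
      ↔ (∀ γ : Γ, γ ≠ 1 → ∃ (v : V) (k : ℕ), adjT v (act (γ ^ k) v)) :=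
  stmt12_general Γ adjT hsym act hact1 hactmul
end

section
/- Let s ≥ 1, m = 4(s+1), write m = 2^a · t with t odd, and let γ ∈ D_{2m} be a nontrivial element of the cyclic subgroup generated by σ^t. Then some power of γ equals σ^{m/2} = σ^{2s+2}, and the stable set S = {2j : 0 ≤ j < s} ∪ {2j + 2s + 3 : 0 ≤ j < s} is a vertex of SG_{2s,4} with S and S·σ^{2s+2} disjoint, hence adjacent in SG_{2s,4}. -/
/-- Let `s ≥ 1`, `m = 4(s+1) = 2^a·t` with `t` odd, and let
`γ = (σ^t)^c` be a nontrivial element of the cyclic subgroup `⟨σ^t⟩ ≤ D_{2m}`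
(σ = rotation by 1 mod m; nontriviality: `m ∤ t·c`).  Then some power of `γ`
equals `σ^{m/2} = σ^{2s+2}`, and the stable set
`S = {2j : 0 ≤ j < s} ∪ {2j+2s+3 : 0 ≤ j < s}` is a vertex of `SG_{2s,4}`
(a stable `2s`-subset of `ℤ_m`) disjoint from `S·σ^{2s+2}`, hence adjacent to it. -/
theorem stmt14 (s a t m : ℕ) (hs : 1 ≤ s) (hm : m = 4 * (s + 1))
    (ht : Odd t) (hat : m = 2 ^ a * t) (c : ℕ) (hc : ¬ (m ∣ t * c)) :
    (∃ e : ℕ, (t * c * e) % m = (2 * s + 2) % m) ∧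
      let S : Finset ℕ := ((Finset.range s).image fun j => 2 * j) ∪
        ((Finset.range s).image fun j => 2 * j + 2 * s + 3)
      S ⊆ Finset.range m ∧ S.card = 2 * s ∧ (∀ i ∈ S, (i + 1) % m ∉ S) ∧
        Disjoint S (S.image fun x => (x + (2 * s + 2)) % m) := by
  have hm8 : 8 ≤ m := by omega
  constructor
  · -- arithmetic part
    have hc0 : c ≠ 0 := by rintro rfl; exact hc (by simp)
    obtain ⟨b, c', hc'odd, hc'⟩ := Nat.exists_eq_pow_mul_and_not_dvd hc0 2 (by norm_num)
    have ha1 : 1 ≤ a := by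
      by_contra h
      have : a = 0 := by omega
      subst this
      simp at hat
      obtain ⟨u, hu⟩ := ht
      omega
    have hba : b < a := by
      by_contra h
      apply hc
      have h1 : (2 : ℕ) ^ a ∣ 2 ^ b := pow_dvd_pow 2 (by omega)
      have h2 : (2 : ℕ) ^ a ∣ c := h1.trans ⟨c', hc'⟩
      obtain ⟨d, hd⟩ := h2
      exact ⟨d, by rw [hat, hd]; ring⟩
    refine ⟨2 ^ (a - 1 - b) * c', ?_⟩
    have hpow : (2 : ℕ) ^ b * 2 ^ (a - 1 - b) = 2 ^ (a - 1) := by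
      rw [← pow_add]; congr 1; omega
    have h2a : 2 ^ (a - 1) * t = 2 * s + 2 := by
      have h2 : 2 * (2 ^ (a - 1) * t) = m := by
        rw [hat, ← mul_assoc, ← pow_succ']
        congr 2
        omega
      omega
    obtain ⟨k, hk⟩ : ∃ k, c' = 2 * k + 1 := by
      rcases Nat.even_or_odd c' with h | h
      · exact absurd h.two_dvd hc'odd
      · obtain ⟨k, hk⟩ := h; exact ⟨k, by omega⟩
    have key : t * c * (2 ^ (a - 1 - b) * c') = m * (2 * (k * k + k)) + (2 * s + 2) := by
      have e1 : t * c * (2 ^ (a - 1 - b) * c') = (2 ^ b * 2 ^ (a - 1 - b)) * t * (c' * c') := by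
        rw [hc']; ring
      rw [e1, hpow, hk, hm, h2a]
      ring
    rw [key, Nat.mul_add_mod]
  · intro S
    have hmem : ∀ x, x ∈ S ↔ (∃ j < s, 2 * j = x) ∨ ∃ j < s, 2 * j + 2 * s + 3 = x := by
      intro x
      simp [S, Finset.mem_union, Finset.mem_image, Finset.mem_range]
    refine ⟨?_, ?_, ?_, ?_⟩
    · intro x hx
      rw [Finset.mem_range]
      rw [hmem] at hx
      rcases hx with ⟨j, hj, rfl⟩ | ⟨j, hj, rfl⟩ <;> omega
    · have hdisj : Disjoint ((Finset.range s).image fun j => 2 * j)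
          ((Finset.range s).image fun j => 2 * j + 2 * s + 3) := by
        simp only [Finset.disjoint_left, Finset.mem_image, Finset.mem_range]
        rintro x ⟨j, hj, rfl⟩ ⟨j', hj', h⟩
        omega
      show (((Finset.range s).image fun j => 2 * j) ∪
        ((Finset.range s).image fun j => 2 * j + 2 * s + 3)).card = 2 * s
      rw [Finset.card_union_of_disjoint hdisj,
        Finset.card_image_of_injective _ (fun x y h => by omega),
        Finset.card_image_of_injective _ (fun x y h => by omega),
        Finset.card_range]
      ring
    · intro i hi
      rw [hmem] at hi
      intro hcon
      rcases hi with ⟨j, hj, rfl⟩ | ⟨j, hj, rfl⟩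
      · have hlt : (2 * j + 1) % m = 2 * j + 1 := Nat.mod_eq_of_lt (by omega)
        rw [hlt, hmem] at hcon
        rcases hcon with ⟨j', hj', h⟩ | ⟨j', hj', h⟩ <;> omega
      · have hlt : (2 * j + 2 * s + 3 + 1) % m = 2 * j + 2 * s + 4 :=
          Nat.mod_eq_of_lt (by omega)
        rw [hlt, hmem] at hcon
        rcases hcon with ⟨j', hj', h⟩ | ⟨j', hj', h⟩ <;> omega
    · rw [Finset.disjoint_left]
      intro x hx hx2
      rw [Finset.mem_image] at hx2
      obtain ⟨y, hy, hxy⟩ := hx2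
      rw [hmem] at hx hy
      rcases hy with ⟨j, hj, rfl⟩ | ⟨j, hj, rfl⟩
      · have hlt : (2 * j + (2 * s + 2)) % m = 2 * j + 2 * s + 2 :=
          Nat.mod_eq_of_lt (by omega)
        rw [hlt] at hxy
        rcases hx with ⟨j', hj', h⟩ | ⟨j', hj', h⟩ <;> omega
      · have he : 2 * j + 2 * s + 3 + (2 * s + 2) = m + (2 * j + 1) := by omega
        rw [he, Nat.add_mod_left, Nat.mod_eq_of_lt (by omega)] at hxy
        rcases hx with ⟨j', hj', h⟩ | ⟨j', hj', h⟩ <;> omega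
end

section
/- Let m = 2n+k with k = 2r even and define v_j = (1, ξ^j, …, ξ^{rj}) ∈ ℝ × ℂ^r, ξ = exp(2πi/m). For any nonzero x ∈ ℝ × ℂ^r, the function h(t) = 2⟨x, (1, exp(2πit/m), …, exp(2πirt/m))⟩ (real inner product) changes sign at every t where exp(2πit/m) is a simple root of the associated polynomial p(z) = x_r + x_{r-1}z + … + 2x_0 z^r + … + conj(x_r) z^{2r}. Consequently, the sign vector (sign⟨x,v_0⟩, …, sign⟨x,v_{m-1}⟩) has at most k zeros and a sign change at every zero that comes from a simple root. -/
open scoped Classical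

/-!
Since `conj z = z⁻¹` on the unit circle,
`2 Re (a · conj z ^ j) · z ^ r = a z ^ (r - j) + conj a · z ^ (r + j)` for `j ≤ r`,
so `h t · z ^ r = p z` at `z = exp (2πit/m)`, i.e. `h t = exp (-2πirt/m) · p (exp (2πit/m))`.
At a simple root the (complex, hence real) derivative of this function is
`exp (-2πirt/m) · p' z · (2πi/m) · z ≠ 0`, so `h` changes sign there. The integer zeros
`0 ≤ j < m` of `h` give distinct `m`-th roots of unity that are roots of `p ≠ 0`,
whose degree is at most `2r = k`.
-/

open Complex Polynomial Finset ComplexConjugate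

theorem exists_mul_neg_of_hasDerivAt {f : ℝ → ℝ} {d t₀ : ℝ} (hf : HasDerivAt f d t₀)
    (hd : d ≠ 0) (h0 : f t₀ = 0) :
    ∃ δ > 0, ∀ t₁ t₂ : ℝ, t₀ - δ < t₁ → t₁ < t₀ → t₀ < t₂ → t₂ < t₀ + δ → f t₁ * f t₂ < 0 := by
  wlog hpos : 0 < d generalizing f d
  · obtain ⟨δ, hδ, hneg⟩ := this hf.neg (neg_ne_zero.mpr hd) (by simp [h0])
      (by linarith [hd.lt_or_gt.resolve_right hpos])
    exact ⟨δ, hδ, fun t₁ t₂ h₁ h₁' h₂ h₂' => by simpa using hneg t₁ t₂ h₁ h₁' h₂ h₂'⟩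
  obtain ⟨δ, hδ, hsign⟩ := Metric.eventually_nhds_iff.mp
    (eventually_nhdsWithin_sign_eq_of_deriv_pos (hf.deriv ▸ hpos) h0)
  refine ⟨δ, hδ, fun t₁ t₂ h₁ h₁' h₂ h₂' => mul_neg_of_neg_of_pos ?_ ?_⟩
  · have := hsign (show dist t₁ t₀ < δ by rw [Real.dist_eq, abs_lt]; constructor <;> linarith)
    rwa [sign_neg (sub_neg.mpr h₁'), sign_eq_neg_one_iff] at this
  · have := hsign (show dist t₂ t₀ < δ by rw [Real.dist_eq, abs_lt]; constructor <;> linarith)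
    rwa [sign_pos (sub_pos.mpr h₂), sign_eq_one_iff] at this

theorem HasDerivAt.of_ofReal_comp {f : ℝ → ℝ} {d : ℂ} {t : ℝ}
    (hf : HasDerivAt (fun s => (f s : ℂ)) d t) : HasDerivAt f d.re t := by
  simpa [Function.comp_def] using (reCLM.hasFDerivAt.comp t hf.hasFDerivAt).hasDerivAt

theorem HasDerivAt.ofReal_re_eq_of_ofReal_comp {f : ℝ → ℝ} {d : ℂ} {t : ℝ}
    (hf : HasDerivAt (fun s => (f s : ℂ)) d t) : (d.re : ℂ) = d :=
  hf.of_ofReal_comp.ofReal_comp.unique hf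

theorem IsPrimitiveRoot.card_filter_isRoot_pow_le {R : Type*} [CommRing R] [IsDomain R]
    {ζ : R} {m : ℕ} (hζ : IsPrimitiveRoot ζ m) {p : R[X]} (hp : p ≠ 0) :
    #{j ∈ range m | p.IsRoot (ζ ^ j)} ≤ p.natDegree := by
  calc #{j ∈ range m | p.IsRoot (ζ ^ j)}
      ≤ p.roots.toFinset.card := by
        refine card_le_card_of_injOn (ζ ^ ·) (fun j hj => ?_) (fun i hi j hj hij => ?_)
        · simp only [coe_filter, mem_range, Set.mem_ofPred_eq] at hj
          simpa [hp] using hj.2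
        · simp only [coe_filter, mem_range, Set.mem_ofPred_eq] at hi hj
          exact hζ.pow_inj hi.1 hj.1 hij
    _ ≤ Multiset.card p.roots := p.roots.toFinset_card_le
    _ ≤ p.natDegree := p.card_roots'

universe u in
theorem Finset.card_filter_bind_pure_le {α β : Type u} (s : Finset α) (f : α → β) (P : β → Prop) :
    #{b ∈ s >>= fun a => pure (f a) | P b} ≤ #{a ∈ s | P (f a)} := by
  rw [bind_pure_comp, fmap_def, filter_image]
  exact card_image_le

theorem two_mul_re_mul_conj_pow_mul_pow {z : ℂ} (hz : ‖z‖ = 1) (a : ℂ) {j n : ℕ} (hjn : j ≤ n) :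
    2 * ((a * conj (z ^ j)).re : ℂ) * z ^ n = a * z ^ (n - j) + conj a * z ^ (n + j) := by
  obtain ⟨s, rfl⟩ := Nat.exists_eq_add_of_le hjn
  have hcancel : conj z ^ j * z ^ (j + s) = z ^ s := by
    rw [pow_add, ← mul_assoc, ← mul_pow, conj_mul', hz]
    simp
  rw [re_eq_add_conj, map_mul, conj_conj, map_pow, Nat.add_sub_cancel_left]
  linear_combination a * hcancel

section AssocPoly

variable {r : ℕ} (x : ℝ × (Fin r → ℂ))

noncomputable def assocPoly : ℂ[X] :=
  C (2 * (x.1 : ℂ)) * X ^ r +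
    ∑ i : Fin r, (C (x.2 i) * X ^ (r - ((i : ℕ) + 1)) + C (conj (x.2 i)) * X ^ (r + ((i : ℕ) + 1)))

theorem natDegree_assocPoly_le : (assocPoly x).natDegree ≤ 2 * r := by
  refine natDegree_add_le_of_degree_le ((natDegree_C_mul_X_pow_le _ _).trans (by omega))
    (natDegree_sum_le_of_forall_le _ _ fun i _ => natDegree_add_le_of_degree_le ?_ ?_)
  · exact (natDegree_C_mul_X_pow_le _ _).trans (by omega)
  · exact (natDegree_C_mul_X_pow_le _ _).trans (by omega)

theorem coeff_assocPoly_self : (assocPoly x).coeff r = 2 * x.1 := by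
  have : ∀ i : Fin r, r ≠ r - ((i : ℕ) + 1) := fun i => by omega
  simp only [assocPoly, coeff_add, finsetSum_coeff, coeff_C_mul_X_pow]
  simp [this]

theorem coeff_assocPoly_add_succ (i : Fin r) :
    (assocPoly x).coeff (r + ((i : ℕ) + 1)) = conj (x.2 i) := by
  have : ∀ j : Fin r, r + ((i : ℕ) + 1) ≠ r - ((j : ℕ) + 1) := fun j => by omega
  simp only [assocPoly, coeff_add, finsetSum_coeff, coeff_C_mul_X_pow]
  simp [this, Fin.val_inj]

theorem assocPoly_ne_zero (hx : x ≠ 0) : assocPoly x ≠ 0 := by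
  contrapose! hx
  refine Prod.ext ?_ (funext fun i => ?_)
  · simpa [hx] using coeff_assocPoly_self x
  · simpa [hx] using (coeff_assocPoly_add_succ x i).symm

theorem eval_assocPoly_of_norm_eq_one {z : ℂ} (hz : ‖z‖ = 1) :
    (assocPoly x).eval z =
      ((2 * (x.1 + ∑ i : Fin r, (x.2 i * conj (z ^ ((i : ℕ) + 1))).re) : ℝ) : ℂ) * z ^ r := by
  simp only [assocPoly, eval_add, eval_mul, eval_C, eval_pow, eval_X, eval_finsetSum]
  push_cast
  rw [mul_add, add_mul, mul_sum, sum_mul]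
  simp only [fun i : Fin r => two_mul_re_mul_conj_pow_mul_pow hz (x.2 i) i.2]

end AssocPoly

theorem exists_mul_neg_of_ofReal_mul_exp_pow_eq_eval {f : ℝ → ℝ} {p : ℂ[X]} {c : ℂ} {r : ℕ}
    (hc : c ≠ 0) (hf : ∀ t : ℝ, (f t : ℂ) * exp (c * t) ^ r = p.eval (exp (c * t))) {t₀ : ℝ}
    (hroot : p.eval (exp (c * t₀)) = 0) (hsimple : p.derivative.eval (exp (c * t₀)) ≠ 0) :
    ∃ δ > 0, ∀ t₁ t₂ : ℝ, t₀ - δ < t₁ → t₁ < t₀ → t₀ < t₂ → t₂ < t₀ + δ → f t₁ * f t₂ < 0 := by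
  have hexp : ∀ a : ℂ, HasDerivAt (fun t : ℝ => exp (a * t)) (a * exp (a * t₀)) t₀ := fun a => by
    simpa [mul_comm] using ((hasDerivAt_id t₀).ofReal_comp.const_mul a).cexp
  have hf' : (fun t : ℝ => (f t : ℂ)) = fun t : ℝ => exp (-(r * c) * t) * p.eval (exp (c * t)) := by
    funext t
    have hinv : exp (-(r * c) * t) * exp (c * t) ^ r = 1 := by
      rw [← exp_nat_mul, ← exp_add, ← exp_zero]
      ring_nf
    rw [← hf t]
    linear_combination (-(f t : ℂ)) * hinv
  have hderiv : HasDerivAt (fun t : ℝ => (f t : ℂ))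
      (exp (-(r * c) * t₀) * (p.derivative.eval (exp (c * t₀)) * (c * exp (c * t₀)))) t₀ := by
    rw [hf']
    have heval : HasDerivAt (fun t : ℝ => p.eval (exp (c * t)))
        (p.derivative.eval (exp (c * t₀)) * (c * exp (c * t₀))) t₀ :=
      (p.hasDerivAt _).comp t₀ (hexp c)
    simpa [hroot] using (hexp (-(r * c))).fun_mul heval
  have hderiv_ne : exp (-(r * c) * t₀) * (p.derivative.eval (exp (c * t₀)) * (c * exp (c * t₀)))
      ≠ 0 := by
    simp [hc, hsimple, exp_ne_zero]
  refine exists_mul_neg_of_hasDerivAt hderiv.of_ofReal_comp ?_ ?_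
  · intro hre
    exact hderiv_ne (by rw [← hderiv.ofReal_re_eq_of_ofReal_comp, hre, ofReal_zero])
  · simpa [hroot, exp_ne_zero] using hf t₀

theorem stmt16_general (k r m : ℕ) (hk : k = 2 * r) (hkm : k < m)
    (x : ℝ × (Fin r → ℂ)) (hx : x ≠ 0) :
    let ip : (ℝ × (Fin r → ℂ)) → (ℝ × (Fin r → ℂ)) → ℝ := fun x y =>
      x.1 * y.1 + ∑ i, (x.2 i * (starRingEnd ℂ) (y.2 i)).re
    let w : ℝ → ℝ × (Fin r → ℂ) := fun t =>
      (1, fun i => Complex.exp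
        (2 * (Real.pi : ℂ) * Complex.I * (((i : ℕ) : ℂ) + 1) * (t : ℂ) / (m : ℂ)))
    let h : ℝ → ℝ := fun t => 2 * ip x (w t)
    let p : Polynomial ℂ := Polynomial.C (2 * (x.1 : ℂ)) * Polynomial.X ^ r +
      ∑ i : Fin r, (Polynomial.C (x.2 i) * Polynomial.X ^ (r - ((i : ℕ) + 1))
        + Polynomial.C ((starRingEnd ℂ) (x.2 i)) * Polynomial.X ^ (r + ((i : ℕ) + 1)))
    (∀ t₀ : ℝ,
        p.eval (Complex.exp (2 * (Real.pi : ℂ) * Complex.I * (t₀ : ℂ) / (m : ℂ))) = 0 →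
        (Polynomial.derivative p).eval
            (Complex.exp (2 * (Real.pi : ℂ) * Complex.I * (t₀ : ℂ) / (m : ℂ))) ≠ 0 →
        ∃ δ > 0, ∀ t₁ t₂ : ℝ, t₀ - δ < t₁ → t₁ < t₀ → t₀ < t₂ → t₂ < t₀ + δ →
          h t₁ * h t₂ < 0) ∧
      ((Finset.range m).filter fun j => h j = 0).card ≤ k := by
  intro ip w h p
  have hm0 : m ≠ 0 := by omega
  have harg : ∀ t : ℝ, 2 * (Real.pi : ℂ) * I * t / m = 2 * Real.pi * I / m * t := fun t => by ring
  have hh : ∀ t : ℝ, (h t : ℂ) * exp (2 * Real.pi * I / m * t) ^ r =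
      p.eval (exp (2 * Real.pi * I / m * t)) := by
    intro t
    have hnorm : ‖exp (2 * Real.pi * I / m * t)‖ = 1 := by
      rw [show 2 * Real.pi * I / m * t = ((2 * Real.pi * t / m : ℝ) : ℂ) * I by push_cast; ring]
      exact norm_exp_ofReal_mul_I _
    rw [show p = assocPoly x from rfl, eval_assocPoly_of_norm_eq_one x hnorm]
    have hw : ∀ i : ℕ, 2 * (Real.pi : ℂ) * I * ((i : ℂ) + 1) * t / m =
        ((i + 1 : ℕ) : ℂ) * (2 * Real.pi * I / m * t) := fun i => by push_cast; ring
    simp only [h, ip, w, mul_one, ← exp_nat_mul, hw]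
  refine ⟨fun t₀ => ?_, ?_⟩
  · simpa only [harg] using exists_mul_neg_of_ofReal_mul_exp_pow_eq_eval
      (by simp [hm0, Real.pi_ne_zero]) hh (t₀ := t₀)
  · have hroots : ∀ j : ℕ, h j = 0 ↔ p.IsRoot (exp (2 * Real.pi * I / m) ^ j) := fun j => by
      rw [← exp_nat_mul, mul_comm, show ((j : ℕ) : ℂ) = ((j : ℝ) : ℂ) by push_cast; rfl,
        IsRoot.def, ← hh]
      simp [exp_ne_zero]
    -- In the statement `range m` is coerced to a `Finset ℝ` through the `Finset` monad.
    calc #{j ∈ range m >>= fun j => pure (j : ℝ) | h j = 0}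
        ≤ #{j ∈ range m | h (j : ℕ) = 0} := card_filter_bind_pure_le _ _ _
      _ = #{j ∈ range m | p.IsRoot (exp (2 * Real.pi * I / m) ^ j)} := by
        rw [filter_congr fun j _ => hroots j]
      _ ≤ p.natDegree :=
        (isPrimitiveRoot_exp m hm0).card_filter_isRoot_pow_le (assocPoly_ne_zero x hx)
      _ ≤ k := hk ▸ natDegree_assocPoly_le x

/-- For `m = 2n+k`, `k = 2r`, nonzero `x ∈ ℝ × ℂ^r`, the function
`h(t) = 2⟨x, (1, e^{2πit/m}, …, e^{2πirt/m})⟩` changes sign at every `t₀` where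
`e^{2πit₀/m}` is a simple root of the associated polynomial
`p(z) = x_r + … + x_1 z^{r-1} + 2x_0 z^r + conj(x_1) z^{r+1} + … + conj(x_r) z^{2r}`.
Consequently the sign vector `(sign⟨x,v_0⟩, …, sign⟨x,v_{m-1}⟩)` has at most `k`
zeros. -/
theorem stmt16 (n k r m : ℕ) (hk : k = 2 * r) (hm : m = 2 * n + k) (hkm : k < m)
    (x : ℝ × (Fin r → ℂ)) (hx : x ≠ 0) :
    let ip : (ℝ × (Fin r → ℂ)) → (ℝ × (Fin r → ℂ)) → ℝ := fun x y =>
      x.1 * y.1 + ∑ i, (x.2 i * (starRingEnd ℂ) (y.2 i)).re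
    let w : ℝ → ℝ × (Fin r → ℂ) := fun t =>
      (1, fun i => Complex.exp
        (2 * (Real.pi : ℂ) * Complex.I * (((i : ℕ) : ℂ) + 1) * (t : ℂ) / (m : ℂ)))
    let h : ℝ → ℝ := fun t => 2 * ip x (w t)
    let p : Polynomial ℂ := Polynomial.C (2 * (x.1 : ℂ)) * Polynomial.X ^ r +
      ∑ i : Fin r, (Polynomial.C (x.2 i) * Polynomial.X ^ (r - ((i : ℕ) + 1))
        + Polynomial.C ((starRingEnd ℂ) (x.2 i)) * Polynomial.X ^ (r + ((i : ℕ) + 1)))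
    (∀ t₀ : ℝ,
        p.eval (Complex.exp (2 * (Real.pi : ℂ) * Complex.I * (t₀ : ℂ) / (m : ℂ))) = 0 →
        (Polynomial.derivative p).eval
            (Complex.exp (2 * (Real.pi : ℂ) * Complex.I * (t₀ : ℂ) / (m : ℂ))) ≠ 0 →
        ∃ δ > 0, ∀ t₁ t₂ : ℝ, t₀ - δ < t₁ → t₁ < t₀ → t₀ < t₂ → t₂ < t₀ + δ →
          h t₁ * h t₂ < 0) ∧
      ((Finset.range m).filter fun j => h j = 0).card ≤ k :=
  stmt16_general k r m hk hkm x hx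
end

section
/- Let k = 2r be even, m = 2n + k, and for each vertex S of SG_{n,k} (a stable n-subset of ℤ_m) associate to S, assuming 0 ∈ S, the weakly increasing system a_1 ≤ … ≤ a_k in (0, 2π] defined by {a_s : 1 ≤ s ≤ k} = {2πr/m : 0 < r ≤ m, r−1 ∉ S, r−2 ∉ S} (with multiplicity). Then [0, 2π) is the disjoint union of the intervals [2πr/m, 2π(r+2)/m) for r ∈ S and the intervals [a_s − 2π/m, a_s) for 1 ≤ s ≤ k. -/
open scoped Classical

/-!
Rescaling by `m / 2π` and taking integer parts, every interval in question is the preimage of an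
integer interval of unit cells: `[j, j + 2)` for `j ∈ S` and `[x - 1, x)` for `x ∈ T`. So it
suffices to tile `[0, m) ∩ ℤ`. A cell `c` is covered by the block starting at `c` if `c ∈ S`, by
the block starting at `c - 1` if `c - 1 ∈ S`, and otherwise by the unit interval ending at
`c + 1 ∈ T`; stability of `S` (cyclically, so that `m - 1 ∉ S`) makes these choices exclusive.
-/

open Set

theorem Ico_mul_div_eq_preimage_floor {L M : ℝ} (hL : 0 < L) (hM : 0 < M) (a b : ℤ) :
    Ico (L * a / M) (L * b / M) = (fun t => ⌊t * (M / L)⌋) ⁻¹' Ico a b := by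
  ext t
  rw [mul_comm L, mul_comm L]
  simp only [mem_preimage, mem_Ico, Int.le_floor, Int.floor_lt, ← div_le_iff₀ (div_pos hM hL),
    ← lt_div_iff₀ (div_pos hM hL), div_div_eq_mul_div]

theorem Int.disjoint_Ico_sub_one {x x' : ℕ} (hne : x ≠ x') :
    Disjoint (Ico ((x : ℤ) - 1) x) (Ico ((x' : ℤ) - 1) x') := by
  rw [Ico_disjoint_Ico]
  omega

def gapEnds (m : ℕ) (S : Finset ℕ) : Finset ℕ :=
  (Finset.Icc 1 m).filter fun x => (x - 1) % m ∉ S ∧ (x + m - 2) % m ∉ S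

namespace StableSet

variable {m : ℕ} {S : Finset ℕ} (hSsub : S ⊆ Finset.range m) (hS0 : 0 ∈ S)
  (hstable : ∀ i ∈ S, (i + 1) % m ∉ S)
include hSsub hS0 hstable

theorem pred_not_mem : m - 1 ∉ S := by
  have hm : 0 < m := Finset.mem_range.mp (hSsub hS0)
  intro h
  have := hstable _ h
  rw [Nat.sub_add_cancel hm, Nat.mod_self] at this
  exact this hS0

theorem add_two_le {j : ℕ} (hj : j ∈ S) : j + 2 ≤ m := by
  have hjm := Finset.mem_range.mp (hSsub hj)
  have : j ≠ m - 1 := by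
    rintro rfl
    exact pred_not_mem hSsub hS0 hstable hj
  omega

theorem succ_not_mem {j : ℕ} (hj : j ∈ S) : j + 1 ∉ S := by
  have := hstable j hj
  rwa [Nat.mod_eq_of_lt (by have := add_two_le hSsub hS0 hstable hj; omega)] at this

theorem mem_gapEnds_iff {x : ℕ} :
    x ∈ gapEnds m S ↔ 1 ≤ x ∧ x ≤ m ∧ x - 1 ∉ S ∧ ∀ j ∈ S, x ≠ j + 2 := by
  have hm1 := pred_not_mem hSsub hS0 hstable
  simp only [gapEnds, Finset.mem_filter, Finset.mem_Icc]
  refine ⟨fun ⟨⟨h1, hxm⟩, hprev, hprev2⟩ => ⟨h1, hxm, ?_, ?_⟩,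
    fun ⟨h1, hxm, hprev, hprev2⟩ => ⟨⟨h1, hxm⟩, ?_, ?_⟩⟩
  · rwa [Nat.mod_eq_of_lt (by omega)] at hprev
  · rintro j hj rfl
    rw [show j + 2 + m - 2 = j + m by omega, Nat.add_mod_right,
      Nat.mod_eq_of_lt (Finset.mem_range.mp (hSsub hj))] at hprev2
    exact hprev2 hj
  · rwa [Nat.mod_eq_of_lt (by omega)]
  · obtain rfl | h2 := eq_or_lt_of_le h1
    · rwa [show 1 + m - 2 = m - 1 by omega, Nat.mod_eq_of_lt (by omega)]
    · rw [show x + m - 2 = x - 2 + m by omega, Nat.add_mod_right, Nat.mod_eq_of_lt (by omega)]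
      intro h
      exact hprev2 _ h (by omega)

theorem Ico_eq_union :
    Ico (0 : ℤ) m = (⋃ j ∈ S, Ico (j : ℤ) (j + 2)) ∪ ⋃ x ∈ gapEnds m S, Ico ((x : ℤ) - 1) x := by
  ext c
  simp only [mem_union, mem_iUnion, mem_Ico, exists_prop]
  constructor
  · rintro ⟨hc0, hcm⟩
    lift c to ℕ using hc0
    by_cases hc : c ∈ S
    · exact Or.inl ⟨c, hc, by omega⟩
    by_cases hprev : 1 ≤ c ∧ c - 1 ∈ S
    · exact Or.inl ⟨c - 1, hprev.2, by omega⟩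
    refine Or.inr ⟨c + 1, (mem_gapEnds_iff hSsub hS0 hstable).mpr ⟨by omega, by omega, hc, ?_⟩,
      by omega⟩
    rintro j hj hcj
    exact hprev ⟨by omega, by rwa [show c - 1 = j by omega]⟩
  · rintro (⟨j, hj, hc⟩ | ⟨x, hx, hc⟩)
    · have := add_two_le hSsub hS0 hstable hj
      omega
    · have := (mem_gapEnds_iff hSsub hS0 hstable).mp hx
      omega

theorem disjoint_blocks {j j' : ℕ} (hj : j ∈ S) (hj' : j' ∈ S) (hne : j ≠ j') :
    Disjoint (Ico (j : ℤ) (j + 2)) (Ico (j' : ℤ) (j' + 2)) := by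
  have h₁ : j' ≠ j + 1 := by
    rintro rfl
    exact succ_not_mem hSsub hS0 hstable hj hj'
  have h₂ : j ≠ j' + 1 := by
    rintro rfl
    exact succ_not_mem hSsub hS0 hstable hj' hj
  rw [Ico_disjoint_Ico]
  omega

theorem disjoint_block_gap {j x : ℕ} (hj : j ∈ S) (hx : x ∈ gapEnds m S) :
    Disjoint (Ico (j : ℤ) (j + 2)) (Ico ((x : ℤ) - 1) x) := by
  obtain ⟨h1, -, hprev, hprev2⟩ := (mem_gapEnds_iff hSsub hS0 hstable).mp hx
  have h₁ : x - 1 ≠ j := by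
    rintro rfl
    exact hprev hj
  have h₂ := hprev2 j hj
  rw [Ico_disjoint_Ico]
  omega

end StableSet

theorem stmt18_general (m : ℕ)
    (S : Finset ℕ) (hSsub : S ⊆ Finset.range m) (hS0 : 0 ∈ S)
    (hstable : ∀ i ∈ S, (i + 1) % m ∉ S) :
    let T : Finset ℕ := (Finset.Icc 1 m).filter fun x =>
      (x - 1) % m ∉ S ∧ (x + m - 2) % m ∉ S
    let I : ℕ → Set ℝ := fun j =>
      Set.Ico (2 * Real.pi * j / m) (2 * Real.pi * (j + 2) / m)
    let J : ℕ → Set ℝ := fun x =>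
      Set.Ico (2 * Real.pi * x / m - 2 * Real.pi / m) (2 * Real.pi * x / m)
    (Set.Ico (0 : ℝ) (2 * Real.pi) = (⋃ j ∈ S, I j) ∪ (⋃ x ∈ T, J x)) ∧
      (∀ j ∈ S, ∀ j' ∈ S, j ≠ j' → Disjoint (I j) (I j')) ∧
      (∀ x ∈ T, ∀ x' ∈ T, x ≠ x' → Disjoint (J x) (J x')) ∧
      (∀ j ∈ S, ∀ x ∈ T, Disjoint (I j) (J x)) := by
  intro T I J
  have hm : (0 : ℝ) < m := by exact_mod_cast Finset.mem_range.mp (hSsub hS0)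
  set φ : ℝ → ℤ := fun t => ⌊t * (m / (2 * Real.pi))⌋
  have hcell (a b : ℤ) : Ico (2 * Real.pi * a / m) (2 * Real.pi * b / m) = φ ⁻¹' Ico a b :=
    Ico_mul_div_eq_preimage_floor Real.two_pi_pos hm a b
  have hI (j : ℕ) : I j = φ ⁻¹' Ico (j : ℤ) (j + 2) := by
    rw [← hcell]; push_cast; rfl
  have hJ (x : ℕ) : J x = φ ⁻¹' Ico ((x : ℤ) - 1) x := by
    rw [← hcell]; push_cast; rw [mul_sub, mul_one, sub_div]
  have h0 : Ico (0 : ℝ) (2 * Real.pi) = φ ⁻¹' Ico 0 m := by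
    rw [← hcell]; push_cast; rw [mul_zero, zero_div, mul_div_cancel_right₀ _ hm.ne']
  simp only [hI, hJ, h0, ← preimage_iUnion₂, ← preimage_union]
  refine ⟨congrArg _ (StableSet.Ico_eq_union hSsub hS0 hstable),
    fun j hj j' hj' hne => (StableSet.disjoint_blocks hSsub hS0 hstable hj hj' hne).preimage φ,
    fun x _ x' _ hne => (Int.disjoint_Ico_sub_one hne).preimage φ,
    fun j hj x hx => (StableSet.disjoint_block_gap hSsub hS0 hstable hj hx).preimage φ⟩

/-- Let `k = 2r`, `m = 2n+k`, and `S` a stable `n`-subset of `ℤ_m` with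
`0 ∈ S`.  With `T = {x : 0 < x ≤ m, x−1 ∉ S, x−2 ∉ S (mod m)}`, the interval
`[0, 2π)` is the disjoint union of the intervals `[2πj/m, 2π(j+2)/m)` for `j ∈ S`
and the intervals `[2πx/m − 2π/m, 2πx/m)` for `x ∈ T`. -/
theorem stmt18 (n k r m : ℕ) (hk : k = 2 * r) (hm : m = 2 * n + k) (hn : 1 ≤ n)
    (S : Finset ℕ) (hSsub : S ⊆ Finset.range m) (hS0 : 0 ∈ S)
    (hScard : S.card = n) (hstable : ∀ i ∈ S, (i + 1) % m ∉ S) :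
    let T : Finset ℕ := (Finset.Icc 1 m).filter fun x =>
      (x - 1) % m ∉ S ∧ (x + m - 2) % m ∉ S
    let I : ℕ → Set ℝ := fun j =>
      Set.Ico (2 * Real.pi * j / m) (2 * Real.pi * (j + 2) / m)
    let J : ℕ → Set ℝ := fun x =>
      Set.Ico (2 * Real.pi * x / m - 2 * Real.pi / m) (2 * Real.pi * x / m)
    (Set.Ico (0 : ℝ) (2 * Real.pi) = (⋃ j ∈ S, I j) ∪ (⋃ x ∈ T, J x)) ∧
      (∀ j ∈ S, ∀ j' ∈ S, j ≠ j' → Disjoint (I j) (I j')) ∧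
      (∀ x ∈ T, ∀ x' ∈ T, x ≠ x' → Disjoint (J x) (J x')) ∧
      (∀ j ∈ S, ∀ x ∈ T, Disjoint (I j) (J x)) :=
  stmt18_general m S hSsub hS0 hstable
end

section
/- Let X be a finite simplicial complex of dimension r with a free action of a finite group Γ, let ℝ^{k+1} carry an orthogonal Γ-action, and suppose there is a Γ-equivariant continuous map f from |X| to the space Iso(ℝ^{k+1}, ℝ^{k+r}) of linear isometric embeddings (Γ acting via its action on ℝ^{k+1}). Fix a closed cover A_0, …, A_{k+r} of S^{k+r-1} such that no A_i contains a pair of antipodal points, let D = min_i dist(A_i, −A_i) > 0, and let ε, ε' > 0 with ε + ε' ≤ D. If for all adjacent vertices y, y' of X one has ‖f(y) − f(y')‖ < ε' (operator norm), then the assignment c(v,y) = min{i : f(y)(v) ∈ A_i} for v in the unit sphere S(ℝ^{k+1}) and y a vertex of X satisfies: whenever ‖v + v'‖ < ε and y, y' are equal or adjacent, c(v,y) ≠ c(v',y'). Hence c induces a proper (k+r+1)-coloring of the graph B_ε(S^k) × X^1. -/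
/-- Let `A_0, …, A_{k+r}` be a closed cover of the sphere `S^{k+r-1}`
with no `A_i` containing an antipodal pair, `D` a positive lower bound on the gaps
`dist(A_i, −A_i)`, and `ε, ε' > 0` with `ε + ε' ≤ D`.  Let `Y` be the vertex set of a
simplicial complex with adjacency `adj`, `f` assign to each vertex a linear isometric
embedding `ℝ^{k+1} → ℝ^{k+r}` with `‖f y − f y'‖ < ε'` (operator norm) for adjacent
`y, y'`, and `c(v, y)` be the least `i` with `f y v ∈ A_i`.  Then for unit vectors
`v, v'` with `‖v + v'‖ < ε` and `y, y'` equal or adjacent, `c(v,y) ≠ c(v',y')`;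
hence `c` gives a proper `(k+r+1)`-coloring of `B_ε(S^k) × X^1`. -/
theorem stmt19 (k r : ℕ) {Y : Type} (adj : Y → Y → Prop)
    (A : Fin (k + r + 1) → Set (EuclideanSpace ℝ (Fin (k + r))))
    (hA_closed : ∀ i, IsClosed (A i))
    (hA_sub : ∀ i, A i ⊆ Metric.sphere (0 : EuclideanSpace ℝ (Fin (k + r))) 1)
    (hA_cover : ∀ p : EuclideanSpace ℝ (Fin (k + r)), ‖p‖ = 1 → ∃ i, p ∈ A i)
    (D ε ε' : ℝ) (hD : 0 < D) (hε : 0 < ε) (hε' : 0 < ε') (hsum : ε + ε' ≤ D)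
    (hgap : ∀ i, ∀ p ∈ A i, ∀ q ∈ A i, D ≤ ‖p + q‖)
    (f : Y → (EuclideanSpace ℝ (Fin (k + 1)) →L[ℝ] EuclideanSpace ℝ (Fin (k + r))))
    (hiso : ∀ y v, ‖f y v‖ = ‖v‖)
    (hlip : ∀ y y', adj y y' → ‖f y - f y'‖ < ε')
    (c : EuclideanSpace ℝ (Fin (k + 1)) → Y → Fin (k + r + 1))
    (hc : ∀ v y, ‖v‖ = 1 → f y v ∈ A (c v y) ∧ ∀ i, f y v ∈ A i → c v y ≤ i) :
    ∀ v v' y y', ‖v‖ = 1 → ‖v'‖ = 1 → ‖v + v'‖ < ε → (y = y' ∨ adj y y') →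
      c v y ≠ c v' y' := by
  intro v v' y y' hv hv' hvv' hadj heq
  have h1 : f y v ∈ A (c v y) := (hc v y hv).1
  have h2 : f y' v' ∈ A (c v y) := heq ▸ (hc v' y' hv').1
  have hgap' : D ≤ ‖f y v + f y' v'‖ := hgap _ _ h1 _ h2
  have hdiff : ‖f y v' - f y' v'‖ < ε' := by
    rcases hadj with rfl | hadj
    · simpa [sub_self] using hε'
    · calc ‖f y v' - f y' v'‖ = ‖(f y - f y') v'‖ := by simp
        _ ≤ ‖f y - f y'‖ * ‖v'‖ := (f y - f y').le_opNorm v'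
        _ < ε' := by rw [hv', mul_one]; exact hlip y y' hadj
  have : ‖f y v + f y' v'‖ < ε + ε' := by
    calc ‖f y v + f y' v'‖ = ‖(f y v + f y v') + (f y' v' - f y v')‖ := by abel_nf
      _ ≤ ‖f y v + f y v'‖ + ‖f y' v' - f y v'‖ := norm_add_le _ _
      _ = ‖f y (v + v')‖ + ‖f y v' - f y' v'‖ := by rw [map_add, norm_sub_rev]
      _ < ε + ε' := add_lt_add (by rw [hiso]; exact hvv') hdiff
  linarith
end
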